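/- arXiv:1605.01718 — 7 statements merged into one kernel-verified Lean document; each statement's English description precedes it below -/
import Mathlib

section
/- Let G = (V,E) be a connected finite simple graph, n ≥ 1, and suppose each ordered pair (a,b) of adjacent vertices carries a unitary n×n complex matrix U_{ab} with U_{ba} = U_{ab}†, such that the product of edge unitaries along every closed walk equals the identity (i.e. the unitary labelled graph is simple). Then there exists a unitary matrix W on ℂ^V ⊗ ℂ^n such that W† H(G) W = Δ(G) ⊗ 1_n, where Δ(G) is the graph Laplacian of G; that is, every connected simple unitary labelled graph is semi-classical. -/
open Matrix BigOperators
open scoped Kronecker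

/-- The product of the edge unitaries along a walk `v₀ v₁ ⋯ v_k`, namely
`U_{v_{k−1} v_k} ⋯ U_{v₁ v₂} U_{v₀ v₁}`. -/
noncomputable def walkProd {V : Type} (G : SimpleGraph V) {n : ℕ}
    (U : V → V → Matrix (Fin n) (Fin n) ℂ) :
    ∀ {u v : V}, G.Walk u v → Matrix (Fin n) (Fin n) ℂ
  | _, _, SimpleGraph.Walk.nil => 1
  | u, _, SimpleGraph.Walk.cons (v := b) _ p => walkProd G U p * U u b

/-- The Hamiltonian `H(G)` associated to a unitary labelled graph, written as one half of the
sum over ordered pairs of adjacent vertices of the terms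
`|a⟩⟨a|⊗1 + |b⟩⟨b|⊗1 − |a⟩⟨b|⊗U_{ab}† − |b⟩⟨a|⊗U_{ab}`. -/
noncomputable def ulgHam {V : Type} [Fintype V] [DecidableEq V]
    (G : SimpleGraph V) [DecidableRel G.Adj] {n : ℕ}
    (U : V → V → Matrix (Fin n) (Fin n) ℂ) : Matrix (V × Fin n) (V × Fin n) ℂ :=
  (1 / 2 : ℂ) • ∑ a : V, ∑ b : V,
    if G.Adj a b then
      Matrix.single a a (1 : ℂ) ⊗ₖ (1 : Matrix (Fin n) (Fin n) ℂ)
        + Matrix.single b b (1 : ℂ) ⊗ₖ (1 : Matrix (Fin n) (Fin n) ℂ)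
        - Matrix.single a b (1 : ℂ) ⊗ₖ (U a b)ᴴ
        - Matrix.single b a (1 : ℂ) ⊗ₖ (U a b)
    else 0

section walkLemmas
variable {V : Type} (G : SimpleGraph V) {n : ℕ} (U : V → V → Matrix (Fin n) (Fin n) ℂ)

lemma walkProd_nil {u : V} : walkProd G U (SimpleGraph.Walk.nil : G.Walk u u) = 1 := rfl

lemma walkProd_cons {u b v : V} (h : G.Adj u b) (p : G.Walk b v) :
    walkProd G U (SimpleGraph.Walk.cons h p) = walkProd G U p * U u b := rfl

lemma walkProd_concat {u v w : V} (p : G.Walk u v) (h : G.Adj v w) :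
    walkProd G U (p.concat h) = U v w * walkProd G U p := by
  induction p with
  | nil => simp [SimpleGraph.Walk.concat, walkProd_nil, walkProd_cons]
  | cons h' p ih =>
      rw [SimpleGraph.Walk.concat_cons, walkProd_cons, ih, walkProd_cons, mul_assoc]

lemma walkProd_append {u v w : V} (p : G.Walk u v) (q : G.Walk v w) :
    walkProd G U (p.append q) = walkProd G U q * walkProd G U p := by
  induction p with
  | nil => simp [walkProd_nil]
  | cons h' p ih =>
      rw [SimpleGraph.Walk.cons_append, walkProd_cons, ih, walkProd_cons, mul_assoc]

lemma walkProd_reverse (hUd : ∀ a b, G.Adj a b → U b a = (U a b)ᴴ)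
    {u v : V} (p : G.Walk u v) :
    walkProd G U p.reverse = (walkProd G U p)ᴴ := by
  induction p with
  | nil => simp [walkProd_nil]
  | cons h' p ih =>
      rw [SimpleGraph.Walk.reverse_cons, walkProd_append, walkProd_cons,
        walkProd_nil, one_mul, ih, walkProd_cons, Matrix.conjTranspose_mul,
        hUd _ _ h']

lemma walkProd_unitary (hU : ∀ a b, G.Adj a b → U a b ∈ Matrix.unitaryGroup (Fin n) ℂ)
    {u v : V} (p : G.Walk u v) :
    walkProd G U p ∈ Matrix.unitaryGroup (Fin n) ℂ := by
  induction p with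
  | nil => exact one_mem _
  | cons h' p ih => exact mul_mem ih (hU _ _ h')

end walkLemmas

section kronLemmas
variable {V : Type} [Fintype V] [DecidableEq V] {n : ℕ}

omit [Fintype V] [DecidableEq V] in
lemma conjTranspose_kron (A : Matrix V V ℂ) (B : Matrix (Fin n) (Fin n) ℂ) :
    (A ⊗ₖ B)ᴴ = Aᴴ ⊗ₖ Bᴴ := by
  ext ⟨i, k⟩ ⟨j, l⟩
  simp [Matrix.conjTranspose_apply, Matrix.kroneckerMap_apply, star_mul', mul_comm]

omit [Fintype V] [DecidableEq V] in
lemma sum_kron_left {α : Type*} (s : Finset α) (A : α → Matrix V V ℂ)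
    (B : Matrix (Fin n) (Fin n) ℂ) :
    (∑ v ∈ s, A v) ⊗ₖ B = ∑ v ∈ s, A v ⊗ₖ B := by
  ext ⟨i, k⟩ ⟨j, l⟩
  simp [Matrix.kroneckerMap_apply, Matrix.sum_apply, Finset.sum_mul]

lemma sum_stdBasis_diag : (∑ v : V, Matrix.single v v (1 : ℂ)) = 1 := by
  ext i j
  simp only [Matrix.sum_apply, Matrix.single, Matrix.of_apply, Matrix.one_apply]
  by_cases h : i = j
  · subst h
    rw [Finset.sum_eq_single i]
    · simp
    · intro v _ hv; simp [hv]
    · intro h'; exact absurd (Finset.mem_univ i) h'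
  · rw [if_neg h, Finset.sum_eq_zero]
    intro v _
    rw [if_neg]
    rintro ⟨rfl, rfl⟩
    exact h rfl

lemma sum_diag_mul_kron (f : V → Matrix (Fin n) (Fin n) ℂ) (a b : V)
    (M : Matrix (Fin n) (Fin n) ℂ) :
    (∑ u : V, Matrix.single u u (1 : ℂ) ⊗ₖ f u)
        * (Matrix.single a b (1 : ℂ) ⊗ₖ M)
      = Matrix.single a b (1 : ℂ) ⊗ₖ (f a * M) := by
  rw [Finset.sum_mul, Finset.sum_eq_single a]
  · rw [← Matrix.mul_kronecker_mul, Matrix.single_mul_single_same, one_mul]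
  · intro u _ hu
    rw [← Matrix.mul_kronecker_mul, Matrix.single_mul_single_of_ne (h := hu),
      Matrix.zero_kronecker]
  · intro h; exact absurd (Finset.mem_univ a) h

lemma kron_mul_sum_diag (f : V → Matrix (Fin n) (Fin n) ℂ) (a b : V)
    (M : Matrix (Fin n) (Fin n) ℂ) :
    (Matrix.single a b (1 : ℂ) ⊗ₖ M)
        * (∑ v : V, Matrix.single v v (1 : ℂ) ⊗ₖ f v)
      = Matrix.single a b (1 : ℂ) ⊗ₖ (M * f b) := by
  rw [Finset.mul_sum, Finset.sum_eq_single b]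
  · rw [← Matrix.mul_kronecker_mul, Matrix.single_mul_single_same, mul_one]
  · intro v _ hv
    rw [← Matrix.mul_kronecker_mul, Matrix.single_mul_single_of_ne (h := Ne.symm hv),
      Matrix.zero_kronecker]
  · intro h; exact absurd (Finset.mem_univ b) h

end kronLemmas

section lapLemma
variable {V : Type} [Fintype V] [DecidableEq V] (G : SimpleGraph V) [DecidableRel G.Adj]

lemma sum_adj_Eaa :
    (∑ a : V, ∑ b : V, if G.Adj a b then Matrix.single a a (1 : ℂ) else 0)
      = G.degMatrix ℂ := by
  ext i j
  simp only [Matrix.sum_apply, SimpleGraph.degMatrix, Matrix.diagonal_apply,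
    apply_ite (fun M : Matrix V V ℂ => M i j), Matrix.zero_apply,
    Matrix.single, Matrix.of_apply]
  rw [Finset.sum_eq_single i]
  · by_cases h : i = j
    · subst h
      simp only [and_self, if_pos rfl, if_true]
      rw [Finset.sum_boole]
      norm_num [SimpleGraph.degree, SimpleGraph.neighborFinset_eq_filter]
    · simp [h]
  · intro a _ ha
    apply Finset.sum_eq_zero
    intro b _
    simp [ha]
  · intro h; exact absurd (Finset.mem_univ i) h

lemma sum_adj_Eab :
    (∑ a : V, ∑ b : V, if G.Adj a b then Matrix.single a b (1 : ℂ) else 0)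
      = G.adjMatrix ℂ := by
  ext i j
  simp only [Matrix.sum_apply, apply_ite (fun M : Matrix V V ℂ => M i j),
    Matrix.zero_apply, Matrix.single, Matrix.of_apply,
    SimpleGraph.adjMatrix_apply]
  rw [Finset.sum_eq_single i]
  · rw [Finset.sum_eq_single j]
    · simp
    · intro b _ hb; simp [hb]
    · intro h; exact absurd (Finset.mem_univ j) h
  · intro a _ ha
    apply Finset.sum_eq_zero
    intro b _
    simp [ha]
  · intro h; exact absurd (Finset.mem_univ i) h

lemma sum_adj_Ebb :
    (∑ a : V, ∑ b : V, if G.Adj a b then Matrix.single b b (1 : ℂ) else 0)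
      = G.degMatrix ℂ := by
  rw [Finset.sum_comm]
  calc ∑ b : V, ∑ a : V, (if G.Adj a b then Matrix.single b b (1 : ℂ) else 0)
      = ∑ b : V, ∑ a : V, (if G.Adj b a then Matrix.single b b (1 : ℂ) else 0) :=
        Finset.sum_congr rfl fun b _ => Finset.sum_congr rfl fun a _ => if_congr (G.adj_comm _ _) rfl rfl
    _ = G.degMatrix ℂ := sum_adj_Eaa G

lemma sum_adj_Eba :
    (∑ a : V, ∑ b : V, if G.Adj a b then Matrix.single b a (1 : ℂ) else 0)
      = G.adjMatrix ℂ := by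
  rw [Finset.sum_comm]
  calc ∑ b : V, ∑ a : V, (if G.Adj a b then Matrix.single b a (1 : ℂ) else 0)
      = ∑ b : V, ∑ a : V, (if G.Adj b a then Matrix.single b a (1 : ℂ) else 0) :=
        Finset.sum_congr rfl fun b _ => Finset.sum_congr rfl fun a _ => if_congr (G.adj_comm _ _) rfl rfl
    _ = G.adjMatrix ℂ := sum_adj_Eab G

lemma lap_sum_eq :
    ((1 / 2 : ℂ) • ∑ a : V, ∑ b : V,
        if G.Adj a b then
          (Matrix.single a a (1 : ℂ) + Matrix.single b b 1
            - Matrix.single a b 1 - Matrix.single b a 1)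
        else 0)
      = G.lapMatrix ℂ := by
  have split : ∀ (c : Prop) [Decidable c] (x y z w : Matrix V V ℂ),
      (if c then x + y - z - w else 0)
        = ((if c then x else 0) + (if c then y else 0))
          - (if c then z else 0) - (if c then w else 0) := by
    intros c _ x y z w; split <;> simp
  simp only [split]
  simp only [Finset.sum_sub_distrib, Finset.sum_add_distrib]
  rw [sum_adj_Eaa, sum_adj_Ebb, sum_adj_Eab, sum_adj_Eba]
  have h2 : G.degMatrix ℂ + G.degMatrix ℂ - G.adjMatrix ℂ - G.adjMatrix ℂ
      = (2 : ℂ) • (G.degMatrix ℂ - G.adjMatrix ℂ) := by module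
  rw [h2, smul_smul, SimpleGraph.lapMatrix]
  norm_num

end lapLemma


/-- Every connected simple unitary labelled graph is semi-classical: there is
a unitary `W` on `ℂ^V ⊗ ℂⁿ` with `W† H(G) W = Δ(G) ⊗ 1ₙ`. -/
theorem ulg_simple_semiclassical
    {V : Type} [Fintype V] [DecidableEq V]
    (G : SimpleGraph V) [DecidableRel G.Adj]
    {n : ℕ} (hn : 1 ≤ n)
    (U : V → V → Matrix (Fin n) (Fin n) ℂ)
    (hG : G.Connected)
    (hUunitary : ∀ a b, G.Adj a b → U a b ∈ Matrix.unitaryGroup (Fin n) ℂ)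
    (hUdagger : ∀ a b, G.Adj a b → U b a = (U a b)ᴴ)
    (hsimple : ∀ (v : V) (w : G.Walk v v), walkProd G U w = 1) :
    ∃ W ∈ Matrix.unitaryGroup (V × Fin n) ℂ,
      Wᴴ * ulgHam G U * W = G.lapMatrix ℂ ⊗ₖ (1 : Matrix (Fin n) (Fin n) ℂ) := by
  classical
  obtain ⟨v₀⟩ := hG.nonempty
  have hpre := hG.preconnected
  set f : V → Matrix (Fin n) (Fin n) ℂ :=
    fun v => walkProd G U ((hpre v₀ v).some) with hf
  -- unitarity of the f's
  have hfu : ∀ v, f v ∈ Matrix.unitaryGroup (Fin n) ℂ :=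
    fun v => walkProd_unitary G U hUunitary _
  have hfu' : ∀ v, (f v)ᴴ * f v = 1 := by
    intro v
    have := Matrix.mem_unitaryGroup_iff'.mp (hfu v)
    rwa [Matrix.star_eq_conjTranspose] at this
  have hU' : ∀ a b, G.Adj a b → (U a b)ᴴ * U a b = 1 := by
    intro a b hab
    have := Matrix.mem_unitaryGroup_iff'.mp (hUunitary a b hab)
    rwa [Matrix.star_eq_conjTranspose] at this
  -- well-definedness of walk products
  have hwd : ∀ (v : V) (p q : G.Walk v₀ v), walkProd G U p = walkProd G U q := by
    intro v p q
    have h1 := hsimple v₀ (p.append q.reverse)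
    rw [walkProd_append, walkProd_reverse G U hUdagger] at h1
    have hq := Matrix.mem_unitaryGroup_iff.mp (walkProd_unitary G U hUunitary q)
    rw [Matrix.star_eq_conjTranspose] at hq
    have h2 : walkProd G U q * ((walkProd G U q)ᴴ * walkProd G U p)
        = walkProd G U q * 1 := by rw [h1]
    rwa [← mul_assoc, hq, one_mul, mul_one] at h2
  have hstep : ∀ a b, G.Adj a b → f b = U a b * f a := by
    intro a b hab
    have := hwd b (((hpre v₀ a).some).concat hab) ((hpre v₀ b).some)
    rw [walkProd_concat] at this
    exact this.symm
  -- the unitary W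
  obtain ⟨W, hWdef⟩ : ∃ W : Matrix (V × Fin n) (V × Fin n) ℂ,
      W = ∑ v : V, Matrix.single v v (1 : ℂ) ⊗ₖ f v := ⟨_, rfl⟩
  have hWH : Wᴴ = ∑ v : V, Matrix.single v v (1 : ℂ) ⊗ₖ (f v)ᴴ := by
    rw [hWdef, Matrix.conjTranspose_sum]
    refine Finset.sum_congr rfl fun v _ => ?_
    rw [conjTranspose_kron]
    congr 1
    ext i j
    simp [Matrix.conjTranspose_apply, Matrix.single, and_comm]
  -- conjugation of a single Kronecker term
  have conj : ∀ (x y : V) (M : Matrix (Fin n) (Fin n) ℂ),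
      Wᴴ * (Matrix.single x y (1 : ℂ) ⊗ₖ M) * W
        = Matrix.single x y (1 : ℂ) ⊗ₖ ((f x)ᴴ * M * f y) := by
    intro x y M
    rw [hWH, sum_diag_mul_kron (fun v => (f v)ᴴ), hWdef, kron_mul_sum_diag]
  -- W is unitary
  have hWuni : W ∈ Matrix.unitaryGroup (V × Fin n) ℂ := by
    rw [Matrix.mem_unitaryGroup_iff', Matrix.star_eq_conjTranspose]
    have : Wᴴ * W = ∑ v : V, Matrix.single v v (1 : ℂ) ⊗ₖ ((f v)ᴴ * f v) := by
      rw [hWH, Finset.sum_mul]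
      refine Finset.sum_congr rfl fun v _ => ?_
      rw [hWdef, kron_mul_sum_diag]
    rw [this]
    have : ∀ v : V, Matrix.single v v (1 : ℂ) ⊗ₖ ((f v)ᴴ * f v)
        = Matrix.single v v (1 : ℂ) ⊗ₖ (1 : Matrix (Fin n) (Fin n) ℂ) := by
      intro v; rw [hfu']
    rw [Finset.sum_congr rfl fun v _ => this v, ← sum_kron_left, sum_stdBasis_diag,
      Matrix.one_kronecker_one]
  refine ⟨W, hWuni, ?_⟩
  -- conjugate each term of the Hamiltonian
  have key : ∀ a b : V,
      Wᴴ * (if G.Adj a b then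
          Matrix.single a a (1 : ℂ) ⊗ₖ (1 : Matrix (Fin n) (Fin n) ℂ)
            + Matrix.single b b (1 : ℂ) ⊗ₖ (1 : Matrix (Fin n) (Fin n) ℂ)
            - Matrix.single a b (1 : ℂ) ⊗ₖ (U a b)ᴴ
            - Matrix.single b a (1 : ℂ) ⊗ₖ (U a b)
        else 0) * W
      = (if G.Adj a b then
          (Matrix.single a a (1 : ℂ) + Matrix.single b b 1
            - Matrix.single a b 1 - Matrix.single b a 1)
        else 0) ⊗ₖ (1 : Matrix (Fin n) (Fin n) ℂ) := by
    intro a b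
    by_cases hab : G.Adj a b
    · rw [if_pos hab, if_pos hab]
      have e1 : (f a)ᴴ * (1 : Matrix (Fin n) (Fin n) ℂ) * f a = 1 := by
        rw [mul_one, hfu']
      have e1b : (f b)ᴴ * (1 : Matrix (Fin n) (Fin n) ℂ) * f b = 1 := by
        rw [mul_one, hfu']
      have e2 : (f a)ᴴ * (U a b)ᴴ * f b = 1 := by
        rw [hstep a b hab, mul_assoc, ← mul_assoc (U a b)ᴴ, hU' a b hab, one_mul, hfu']
      have e3 : (f b)ᴴ * U a b * f a = 1 := by
        rw [hstep a b hab, Matrix.conjTranspose_mul, mul_assoc, mul_assoc,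
          ← mul_assoc (U a b)ᴴ, hU' a b hab, one_mul, hfu']
      rw [mul_sub, sub_mul, mul_sub, sub_mul, mul_add, add_mul,
        conj, conj, conj, conj, e1, e1b, e2, e3]
      ext ⟨i, k⟩ ⟨j, l⟩
      simp [Matrix.kroneckerMap_apply, Matrix.sub_apply, Matrix.add_apply, sub_mul, add_mul]
    · rw [if_neg hab, if_neg hab, mul_zero, zero_mul, Matrix.zero_kronecker]
  calc Wᴴ * ulgHam G U * W
      = (1 / 2 : ℂ) • ∑ a : V, ∑ b : V,
          (Wᴴ * (if G.Adj a b then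
            Matrix.single a a (1 : ℂ) ⊗ₖ (1 : Matrix (Fin n) (Fin n) ℂ)
              + Matrix.single b b (1 : ℂ) ⊗ₖ (1 : Matrix (Fin n) (Fin n) ℂ)
              - Matrix.single a b (1 : ℂ) ⊗ₖ (U a b)ᴴ
              - Matrix.single b a (1 : ℂ) ⊗ₖ (U a b)
          else 0) * W) := by
        rw [ulgHam, mul_smul_comm, smul_mul_assoc]
        congr 1
        rw [Finset.mul_sum, Finset.sum_mul]
        refine Finset.sum_congr rfl fun a _ => ?_
        rw [Finset.mul_sum, Finset.sum_mul]
    _ = (1 / 2 : ℂ) • ∑ a : V, ∑ b : V,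
          ((if G.Adj a b then
            (Matrix.single a a (1 : ℂ) + Matrix.single b b 1
              - Matrix.single a b 1 - Matrix.single b a 1)
          else 0) ⊗ₖ (1 : Matrix (Fin n) (Fin n) ℂ)) := by
        refine congrArg _ (Finset.sum_congr rfl fun a _ => Finset.sum_congr rfl fun b _ => ?_)
        exact key a b
    _ = G.lapMatrix ℂ ⊗ₖ (1 : Matrix (Fin n) (Fin n) ℂ) := by
        rw [show (∑ a : V, ∑ b : V,
            ((if G.Adj a b then
              (Matrix.single a a (1 : ℂ) + Matrix.single b b 1
                - Matrix.single a b 1 - Matrix.single b a 1)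
            else 0) ⊗ₖ (1 : Matrix (Fin n) (Fin n) ℂ)))
            = (∑ a : V, ∑ b : V,
              (if G.Adj a b then
                (Matrix.single a a (1 : ℂ) + Matrix.single b b 1
                  - Matrix.single a b 1 - Matrix.single b a 1)
              else 0)) ⊗ₖ (1 : Matrix (Fin n) (Fin n) ℂ) from by
          rw [sum_kron_left]
          exact Finset.sum_congr rfl fun a _ => (sum_kron_left _ _ _).symm]
        rw [← Matrix.smul_kronecker, lap_sum_eq]
end

section
/- (Kitaev's geometrical lemma.) Let A and B be Hermitian positive semidefinite operators on a finite-dimensional complex inner product space such that every nonzero eigenvalue of A is at least μ, every nonzero eigenvalue of B is at least μ, where μ > 0, and ker A ∩ ker B = {0}. Let cos θ := sup{ |⟨α,β⟩| : α ∈ ker A, β ∈ ker B, ‖α‖ = ‖β‖ = 1 } (interpreted as 0 if either kernel is trivial). Then λ_min(A + B) ≥ 2μ sin²(θ/2) = μ(1 − cos θ). -/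
open scoped BigOperators

open Finset in
/-- Key spectral lemma: there is `u ∈ ker A` with `x - u ⊥ ker A` and
`μ‖x-u‖² ≤ Re⟨x, A x⟩`. -/
lemma kitaev_aux
    {E : Type} [NormedAddCommGroup E] [InnerProductSpace ℂ E] [FiniteDimensional ℂ E]
    (A : E →ₗ[ℂ] E) (μ : ℝ)
    (hA : LinearMap.IsSymmetric A)
    (hAeig : ∀ t : ℂ, Module.End.HasEigenvalue (A : Module.End ℂ E) t → t ≠ 0 → μ ≤ t.re)
    (x : E) :
    ∃ u ∈ LinearMap.ker A, (x - u) ∈ (LinearMap.ker A)ᗮ ∧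
      μ * ‖x - u‖ ^ 2 ≤ (inner ℂ x (A x) : ℂ).re := by
  classical
  set n := Module.finrank ℂ E with hn
  set b := hA.eigenvectorBasis rfl with hb
  set lam := hA.eigenvalues (rfl : Module.finrank ℂ E = n) with hlam
  set c : Fin n → ℂ := fun i => b.repr x i with hc
  set S : Finset (Fin n) := Finset.univ.filter (fun i => lam i ≠ 0) with hS
  set y : E := ∑ i ∈ S, c i • b i with hy
  have hmu : ∀ i ∈ S, μ ≤ lam i := by
    intro i hi
    have hne : (lam i : ℂ) ≠ 0 := by
      simp only [hS, Finset.mem_filter] at hi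
      exact_mod_cast hi.2
    have := hAeig (lam i) (hA.hasEigenvalue_eigenvalues rfl i) hne
    simpa using this
  -- A y = A x
  have hAx : A x = ∑ i ∈ Finset.univ, ((lam i : ℂ) * c i) • b i := by
    conv_lhs => rw [← b.sum_repr (A x)]
    refine Finset.sum_congr rfl fun i _ => ?_
    rw [hA.eigenvectorBasis_apply_self_apply]
    norm_cast
  have hAy : A y = A x := by
    rw [hy, map_sum, hAx]
    have : ∀ i ∈ S, A (c i • b i) = ((lam i : ℂ) * c i) • b i := by
      intro i _
      rw [map_smul, hA.apply_eigenvectorBasis, smul_smul, mul_comm]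
      rfl
    rw [Finset.sum_congr rfl this]
    refine Finset.sum_subset (f := fun i => ((lam i : ℂ) * c i) • b i) (Finset.subset_univ S) ?_
    intro i _ hi
    simp only [hS, Finset.mem_filter, Finset.mem_univ, true_and, not_not] at hi
    simp [hi]
  have hu : x - y ∈ LinearMap.ker A := by
    rw [LinearMap.mem_ker, map_sub, hAy, sub_self]
  -- y ∈ (ker A)ᗮ
  have hborth : ∀ i ∈ S, (b i : E) ∈ (LinearMap.ker A)ᗮ := by
    intro i hi
    rw [Submodule.mem_orthogonal]
    intro k hk
    have hne : (lam i : ℂ) ≠ 0 := by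
      simp only [hS, Finset.mem_filter] at hi
      exact_mod_cast hi.2
    have h1 : (inner ℂ k (A (b i)) : ℂ) = (lam i : ℂ) * inner ℂ k (b i) := by
      rw [hA.apply_eigenvectorBasis, inner_smul_right]
      rfl
    have h2 : (inner ℂ k (A (b i)) : ℂ) = 0 := by
      rw [← hA k (b i)]
      rw [LinearMap.mem_ker] at hk
      rw [hk, inner_zero_left]
    rw [h2] at h1
    exact (mul_eq_zero.mp h1.symm).resolve_left hne
  have hyorth : y ∈ (LinearMap.ker A)ᗮ := by
    rw [hy]
    exact Submodule.sum_mem _ fun i hi => Submodule.smul_mem _ _ (hborth i hi)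
  refine ⟨x - y, hu, by simpa using hyorth, ?_⟩
  have hxy : x - (x - y) = y := by abel
  rw [hxy]
  -- ‖y‖² = ∑ i ∈ S, ‖c i‖²
  have hynorm : ‖y‖ ^ 2 = ∑ i ∈ S, ‖c i‖ ^ 2 := by
    have h : (inner ℂ y y : ℂ) = ∑ i ∈ S, (starRingEnd ℂ) (c i) * c i := by
      rw [hy]; exact b.orthonormal.inner_sum c c S
    have h2 : ‖y‖ ^ 2 = (inner ℂ y y : ℂ).re := by
      rw [← inner_self_eq_norm_sq (𝕜 := ℂ)]; rfl
    rw [h2, h, Complex.re_sum]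
    refine Finset.sum_congr rfl fun i _ => ?_
    rw [← Complex.normSq_eq_conj_mul_self]
    simp [Complex.sq_norm]
  -- Re⟨x, A x⟩ = ∑ i, lam i * ‖c i‖²
  have hinner : (inner ℂ x (A x) : ℂ).re = ∑ i ∈ Finset.univ, lam i * ‖c i‖ ^ 2 := by
    have h : (inner ℂ x (A x) : ℂ) = ∑ i, (starRingEnd ℂ) (b.repr x i) * b.repr (A x) i := by
      rw [← b.repr.inner_map_map x (A x), PiLp.inner_apply]
      exact Finset.sum_congr rfl fun i _ => by rw [RCLike.inner_apply]; ring
    rw [h, Complex.re_sum]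
    refine Finset.sum_congr rfl fun i _ => ?_
    rw [hA.eigenvectorBasis_apply_self_apply rfl x i]
    show ((starRingEnd ℂ) (c i) * ((lam i : ℂ) * c i)).re = lam i * ‖c i‖ ^ 2
    rw [show (starRingEnd ℂ) (c i) * ((lam i : ℂ) * c i)
        = (lam i : ℂ) * ((starRingEnd ℂ) (c i) * c i) by ring,
      ← Complex.normSq_eq_conj_mul_self]
    simp [Complex.sq_norm]
  rw [hinner, hynorm]
  have hsum : ∑ i ∈ Finset.univ, lam i * ‖c i‖ ^ 2 = ∑ i ∈ S, lam i * ‖c i‖ ^ 2 := by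
    refine (Finset.sum_subset (f := fun i => lam i * ‖c i‖ ^ 2) (Finset.subset_univ S) ?_).symm
    intro i _ hi
    simp only [hS, Finset.mem_filter, Finset.mem_univ, true_and, not_not] at hi
    simp [hi]
  rw [hsum, Finset.mul_sum]
  refine Finset.sum_le_sum fun i hi => ?_
  exact mul_le_mul_of_nonneg_right (hmu i hi) (by positivity)

/-- **Kitaev's geometrical lemma.** If `A, B ≥ 0` are Hermitian operators on a
finite-dimensional complex inner ℂ product space whose nonzero eigenvalues are at least `μ > 0`
and whose kernels intersect trivially, then `λ_min(A+B) ≥ 2μ sin²(θ/2) = μ(1 − cos θ)`,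
where `cos θ` is the supremum of `|⟨α,β⟩|` over unit vectors `α ∈ ker A`, `β ∈ ker B`
(interpreted as `0` if either kernel is trivial).  The conclusion is expressed via the
quadratic form of the Hermitian operator `A + B`. -/
theorem kitaev_geometrical_lemma
    {E : Type} [NormedAddCommGroup E] [InnerProductSpace ℂ E] [FiniteDimensional ℂ E]
    (A B : E →ₗ[ℂ] E) (μ : ℝ) (hμ : 0 < μ)
    (hA : LinearMap.IsSymmetric A) (hB : LinearMap.IsSymmetric B)
    (hApsd : ∀ x : E, 0 ≤ (inner ℂ x (A x) : ℂ).re)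
    (hBpsd : ∀ x : E, 0 ≤ (inner ℂ x (B x) : ℂ).re)
    (hAeig : ∀ t : ℂ, Module.End.HasEigenvalue (A : Module.End ℂ E) t → t ≠ 0 → μ ≤ t.re)
    (hBeig : ∀ t : ℂ, Module.End.HasEigenvalue (B : Module.End ℂ E) t → t ≠ 0 → μ ≤ t.re)
    (hker : LinearMap.ker A ⊓ LinearMap.ker B = ⊥) :
    ∀ x : E,
      μ * (1 - sSup ({0} ∪ {r : ℝ | ∃ α ∈ LinearMap.ker A, ∃ β ∈ LinearMap.ker B,
              ‖α‖ = 1 ∧ ‖β‖ = 1 ∧ r = ‖(inner ℂ α β : ℂ)‖})) * ‖x‖ ^ 2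
        ≤ (inner ℂ x ((A + B) x) : ℂ).re := by
  intro x
  set Sset : Set ℝ := {0} ∪ {r : ℝ | ∃ α ∈ LinearMap.ker A, ∃ β ∈ LinearMap.ker B,
      ‖α‖ = 1 ∧ ‖β‖ = 1 ∧ r = ‖(inner ℂ α β : ℂ)‖} with hSset
  set cth : ℝ := sSup Sset with hcth
  have hbdd : BddAbove Sset := by
    refine ⟨1, ?_⟩
    rintro r (rfl | ⟨α, hα, β, hβ, hnα, hnβ, rfl⟩)
    · norm_num
    · calc ‖(inner ℂ α β : ℂ)‖ ≤ ‖α‖ * ‖β‖ := norm_inner_le_norm α β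
        _ = 1 := by rw [hnα, hnβ]; ring
  have hc0 : 0 ≤ cth := le_csSup hbdd (Or.inl rfl)
  have hcb : ∀ u ∈ LinearMap.ker A, ∀ v ∈ LinearMap.ker B,
      ‖(inner ℂ u v : ℂ)‖ ≤ cth * (‖u‖ * ‖v‖) := by
    intro u hu v hv
    rcases eq_or_ne u 0 with rfl | hu0
    · simp [hc0]
    rcases eq_or_ne v 0 with rfl | hv0
    · simp [hc0]
    have hnu : (0:ℝ) < ‖u‖ := norm_pos_iff.mpr hu0
    have hnv : (0:ℝ) < ‖v‖ := norm_pos_iff.mpr hv0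
    have hmem : ‖(inner ℂ (((‖u‖:ℂ))⁻¹ • u) (((‖v‖:ℂ))⁻¹ • v) : ℂ)‖ ∈ Sset := by
      refine Or.inr ⟨_, Submodule.smul_mem _ _ hu, _, Submodule.smul_mem _ _ hv, ?_, ?_, rfl⟩
      · rw [norm_smul]
        simp [hnu.le, inv_mul_cancel₀ hnu.ne']
      · rw [norm_smul]
        simp [hnv.le, inv_mul_cancel₀ hnv.ne']
    have hle := le_csSup hbdd hmem
    have heq : ‖(inner ℂ (((‖u‖:ℂ))⁻¹ • u) (((‖v‖:ℂ))⁻¹ • v) : ℂ)‖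
        = ‖u‖⁻¹ * ‖v‖⁻¹ * ‖(inner ℂ u v : ℂ)‖ := by
      rw [inner_smul_left, inner_smul_right]
      simp [norm_mul]
      ring
    rw [heq] at hle
    rw [← hcth] at hle
    calc ‖(inner ℂ u v : ℂ)‖ = (‖u‖ * ‖v‖) * (‖u‖⁻¹ * ‖v‖⁻¹ * ‖(inner ℂ u v : ℂ)‖) := by
          field_simp
      _ ≤ (‖u‖ * ‖v‖) * cth := by
          exact mul_le_mul_of_nonneg_left hle (by positivity)
      _ = cth * (‖u‖ * ‖v‖) := by ring
  obtain ⟨u, hu, hxu, hAineq⟩ := kitaev_aux A μ hA hAeig x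
  obtain ⟨v, hv, hxv, hBineq⟩ := kitaev_aux B μ hB hBeig x
  -- Pythagoras
  have pyth : ∀ (w : E) (K : Submodule ℂ E), w ∈ K → (x - w) ∈ Kᗮ →
      ‖x‖ ^ 2 = ‖w‖ ^ 2 + ‖x - w‖ ^ 2 ∧ (inner ℂ x w : ℂ).re = ‖w‖ ^ 2 := by
    intro w K hw hxw
    have h0 : (inner ℂ w (x - w) : ℂ) = 0 :=
      Submodule.inner_right_of_mem_orthogonal hw hxw
    have h0' : (inner ℂ (x - w) w : ℂ) = 0 :=
      Submodule.inner_left_of_mem_orthogonal hw hxw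
    constructor
    · have hx : x = w + (x - w) := by abel
      calc ‖x‖ ^ 2 = ‖w + (x - w)‖ ^ 2 := by rw [← hx]
        _ = ‖w‖ ^ 2 + 2 * (RCLike.re (inner ℂ w (x - w) : ℂ)) + ‖x - w‖ ^ 2 :=
            norm_add_sq (𝕜 := ℂ) w (x - w)
        _ = ‖w‖ ^ 2 + ‖x - w‖ ^ 2 := by rw [h0]; simp
    · have hx : (inner ℂ x w : ℂ) = inner ℂ w w + inner ℂ (x - w) w := by
        rw [← inner_add_left]
        norm_num
      rw [hx, h0', add_zero]
      rw [← inner_self_eq_norm_sq (𝕜 := ℂ)]; rfl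
  obtain ⟨pythA, reA⟩ := pyth u _ hu hxu
  obtain ⟨pythB, reB⟩ := pyth v _ hv hxv
  -- bound on ‖u‖² + ‖v‖²
  have hre_uv : (inner ℂ u v : ℂ).re ≤ cth * (‖u‖ * ‖v‖) :=
    le_trans (Complex.re_le_norm _)
      (hcb u hu v hv)
  have huv_sq : ‖u + v‖ ^ 2 ≤ (1 + cth) * (‖u‖ ^ 2 + ‖v‖ ^ 2) := by
    have h := norm_add_sq (𝕜 := ℂ) u v
    have hre : (RCLike.re (inner ℂ u v : ℂ)) = (inner ℂ u v : ℂ).re := rfl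
    rw [hre] at h
    nlinarith [hre_uv, hc0, sq_nonneg (‖u‖ - ‖v‖), norm_nonneg u, norm_nonneg v,
      mul_nonneg hc0 (sq_nonneg (‖u‖ - ‖v‖))]
  have hs_le : (inner ℂ x (u + v) : ℂ).re = ‖u‖ ^ 2 + ‖v‖ ^ 2 := by
    rw [inner_add_right, Complex.add_re, reA, reB]
  have hs_le2 : ‖u‖ ^ 2 + ‖v‖ ^ 2 ≤ ‖x‖ * ‖u + v‖ := by
    rw [← hs_le]
    exact le_trans (Complex.re_le_norm _)
      (norm_inner_le_norm x (u + v))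
  have hkey : ‖u‖ ^ 2 + ‖v‖ ^ 2 ≤ (1 + cth) * ‖x‖ ^ 2 := by
    set s : ℝ := ‖u‖ ^ 2 + ‖v‖ ^ 2 with hs
    have hs0 : 0 ≤ s := by positivity
    rcases eq_or_lt_of_le hs0 with h | h
    · rw [← h]; positivity
    · have hw0 : 0 ≤ ‖u + v‖ := norm_nonneg _
      have hx0 : 0 ≤ ‖x‖ := norm_nonneg _
      nlinarith [hs_le2, huv_sq, mul_le_mul_of_nonneg_left huv_sq (mul_pos h h).le]
  -- final chain
  have hAB : (inner ℂ x ((A + B) x) : ℂ).re = (inner ℂ x (A x) : ℂ).re + (inner ℂ x (B x) : ℂ).re := by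
    rw [LinearMap.add_apply, inner_add_right, Complex.add_re]
  rw [hAB]
  have h1 : μ * ‖x - u‖ ^ 2 ≤ (inner ℂ x (A x) : ℂ).re := hAineq
  have h2 : μ * ‖x - v‖ ^ 2 ≤ (inner ℂ x (B x) : ℂ).re := hBineq
  nlinarith [pythA, pythB, hkey, hμ.le, sq_nonneg ‖x‖]
end

section
/- Let Π_A and Π_B be orthogonal projections on a finite-dimensional complex inner product space whose ranges intersect only in the zero vector, and set cos θ := sup{ |⟨α,β⟩| : α ∈ range Π_A, β ∈ range Π_B, ‖α‖ = ‖β‖ = 1 } (interpreted as 0 if either range is trivial). Then every eigenvalue λ of Π_A + Π_B satisfies λ ≤ 1 + cos θ; equivalently, Π_A + Π_B ≤ (1 + cos θ)·1 in the Loewner order. -/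
open scoped BigOperators

/-- If `Π_A, Π_B` are orthogonal projections on a finite-dimensional complex
inner ℂ product space whose ranges intersect only in `0`, and `cos θ` is the supremum of
`|⟨α,β⟩|` over unit vectors `α ∈ range Π_A`, `β ∈ range Π_B` (interpreted as `0` when either
range is trivial), then every eigenvalue `λ` of `Π_A + Π_B` satisfies `λ ≤ 1 + cos θ`;
equivalently `Π_A + Π_B ≤ (1 + cos θ)·1` in the Loewner order. -/
theorem sum_of_projections_eigenvalue_bound
    {E : Type} [NormedAddCommGroup E] [InnerProductSpace ℂ E] [FiniteDimensional ℂ E]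
    (PA PB : E →ₗ[ℂ] E)
    (hPA : LinearMap.IsSymmetric PA) (hPB : LinearMap.IsSymmetric PB)
    (hPA2 : PA ∘ₗ PA = PA) (hPB2 : PB ∘ₗ PB = PB)
    (hrange : LinearMap.range PA ⊓ LinearMap.range PB = ⊥) :
    (∀ t : ℂ, Module.End.HasEigenvalue ((PA + PB : E →ₗ[ℂ] E) : Module.End ℂ E) t →
      t.re ≤ 1 + sSup ({0} ∪ {r : ℝ | ∃ α ∈ LinearMap.range PA, ∃ β ∈ LinearMap.range PB,
              ‖α‖ = 1 ∧ ‖β‖ = 1 ∧ r = ‖(inner ℂ α β : ℂ)‖}))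
    ∧ (∀ x : E,
        (inner ℂ x ((PA + PB) x) : ℂ).re
          ≤ (1 + sSup ({0} ∪ {r : ℝ | ∃ α ∈ LinearMap.range PA, ∃ β ∈ LinearMap.range PB,
              ‖α‖ = 1 ∧ ‖β‖ = 1 ∧ r = ‖(inner ℂ α β : ℂ)‖})) * ‖x‖ ^ 2) := by
  set S : Set ℝ := {0} ∪ {r : ℝ | ∃ α ∈ LinearMap.range PA, ∃ β ∈ LinearMap.range PB,
              ‖α‖ = 1 ∧ ‖β‖ = 1 ∧ r = ‖(inner ℂ α β : ℂ)‖} with hS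
  have hbdd : BddAbove S := by
    refine ⟨1, ?_⟩
    rintro r (rfl | ⟨α, hα, β, hβ, h1, h2, rfl⟩)
    · norm_num
    · calc ‖(inner ℂ α β : ℂ)‖ ≤ ‖α‖ * ‖β‖ := norm_inner_le_norm α β
        _ = 1 := by rw [h1, h2]; ring
  have h0 : (0:ℝ) ∈ S := Or.inl rfl
  have hc0 : 0 ≤ sSup S := le_csSup hbdd h0
  set c := sSup S with hc
  -- key inequality
  have key : ∀ a ∈ LinearMap.range PA, ∀ b ∈ LinearMap.range PB,
      ‖(inner ℂ a b : ℂ)‖ ≤ c * ‖a‖ * ‖b‖ := by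
    intro a ha b hb
    rcases eq_or_ne a 0 with rfl | ha0
    · simp
    rcases eq_or_ne b 0 with rfl | hb0
    · simp
    have hna : (0:ℝ) < ‖a‖ := norm_pos_iff.mpr ha0
    have hnb : (0:ℝ) < ‖b‖ := norm_pos_iff.mpr hb0
    have hmem : ‖(inner ℂ (((‖a‖⁻¹ : ℝ) : ℂ) • a) (((‖b‖⁻¹ : ℝ) : ℂ) • b) : ℂ)‖ ∈ S := by
      refine Or.inr ⟨_, Submodule.smul_mem _ _ ha, _, Submodule.smul_mem _ _ hb, ?_, ?_, rfl⟩
      · rw [norm_smul, Complex.norm_real, Real.norm_eq_abs, abs_inv, abs_norm]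
        field_simp
      · rw [norm_smul, Complex.norm_real, Real.norm_eq_abs, abs_inv, abs_norm]
        field_simp
    have hle := le_csSup hbdd hmem
    rw [inner_smul_left, inner_smul_right, Complex.conj_ofReal, norm_mul, norm_mul,
      Complex.norm_real, Complex.norm_real, Real.norm_eq_abs, Real.norm_eq_abs,
      abs_inv, abs_inv, abs_norm, abs_norm] at hle
    have := mul_le_mul_of_nonneg_left hle (le_of_lt (mul_pos hna hnb))
    calc ‖(inner ℂ a b : ℂ)‖ = ‖a‖ * ‖b‖ * (‖a‖⁻¹ * (‖b‖⁻¹ * ‖(inner ℂ a b : ℂ)‖)) := by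
          field_simp
      _ ≤ ‖a‖ * ‖b‖ * c := this
      _ = c * ‖a‖ * ‖b‖ := by ring
  -- part 2
  have part2 : ∀ x : E, (inner ℂ x ((PA + PB) x) : ℂ).re ≤ (1 + c) * ‖x‖ ^ 2 := by
    intro x
    set a := PA x with hadef
    set b := PB x with hbdef
    have hAA : PA a = a := by
      rw [hadef, ← LinearMap.comp_apply, hPA2]
    have hBB : PB b = b := by
      rw [hbdef, ← LinearMap.comp_apply, hPB2]
    have hself : ∀ v : E, (inner ℂ v v : ℂ) = ((‖v‖ : ℝ) : ℂ) ^ 2 := fun v =>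
      inner_self_eq_norm_sq_to_K v
    have hselfre : ∀ v : E, (inner ℂ v v : ℂ).re = ‖v‖ ^ 2 := by
      intro v
      rw [hself v, ← Complex.ofReal_pow, Complex.ofReal_re]
    have hiA : (inner ℂ x a : ℂ) = inner ℂ a a := by
      conv_lhs => rw [← hAA]
      rw [← hPA x a, ← hadef]
    have hiB : (inner ℂ x b : ℂ) = inner ℂ b b := by
      conv_lhs => rw [← hBB]
      rw [← hPB x b, ← hbdef]
    have hre : (inner ℂ x ((PA + PB) x) : ℂ).re = ‖a‖ ^ 2 + ‖b‖ ^ 2 := by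
      rw [LinearMap.add_apply, inner_add_right, Complex.add_re, ← hadef, ← hbdef,
        hiA, hiB, hselfre a, hselfre b]
    rw [hre]
    have hcs : ‖a‖ ^ 2 + ‖b‖ ^ 2 ≤ ‖x‖ * ‖a + b‖ := by
      have h1 : (inner ℂ x (a + b) : ℂ).re = ‖a‖ ^ 2 + ‖b‖ ^ 2 := by
        rw [inner_add_right, Complex.add_re, hiA, hiB, hselfre a, hselfre b]
      calc ‖a‖ ^ 2 + ‖b‖ ^ 2 = (inner ℂ x (a + b) : ℂ).re := h1.symm
        _ ≤ ‖(inner ℂ x (a + b) : ℂ)‖ := Complex.re_le_norm _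
        _ ≤ ‖x‖ * ‖a + b‖ := norm_inner_le_norm x (a + b)
    have hab : ‖(inner ℂ a b : ℂ)‖ ≤ c * ‖a‖ * ‖b‖ :=
      key a (LinearMap.mem_range_self PA x) b (LinearMap.mem_range_self PB x)
    have habre : (inner ℂ a b : ℂ).re ≤ c * ‖a‖ * ‖b‖ :=
      le_trans (Complex.re_le_norm _) hab
    have hsum : ‖a + b‖ ^ 2 ≤ (1 + c) * (‖a‖ ^ 2 + ‖b‖ ^ 2) := by
      have hexp : ‖a + b‖ ^ 2 = ‖a‖ ^ 2 + 2 * (inner ℂ a b : ℂ).re + ‖b‖ ^ 2 :=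
        norm_add_sq (𝕜 := ℂ) a b
      nlinarith [sq_nonneg (‖a‖ - ‖b‖), norm_nonneg a, norm_nonneg b]
    rcases eq_or_lt_of_le (by positivity : (0:ℝ) ≤ ‖a‖ ^ 2 + ‖b‖ ^ 2) with hz | hpos
    · rw [← hz]; positivity
    · nlinarith [norm_nonneg x, norm_nonneg (a + b), sq_nonneg (‖x‖ * ‖a + b‖ - (‖a‖^2 + ‖b‖^2))]
  refine ⟨?_, part2⟩
  intro t ht
  obtain ⟨x, hx⟩ := ht.exists_hasEigenvector
  have hx0 : x ≠ 0 := hx.right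
  have heq : (PA + PB) x = t • x := hx.apply_eq_smul
  have h1 : (inner ℂ x ((PA + PB) x) : ℂ).re = t.re * ‖x‖ ^ 2 := by
    have hself : (inner ℂ x x : ℂ) = ((‖x‖ : ℝ) : ℂ) ^ 2 := inner_self_eq_norm_sq_to_K x
    have hcast : ((‖x‖ : ℝ) : ℂ) ^ 2 = ((‖x‖ ^ 2 : ℝ) : ℂ) := by push_cast; ring
    rw [heq, inner_smul_right, hself, hcast, Complex.mul_re, Complex.ofReal_re,
      Complex.ofReal_im]
    ring
  have h2 := part2 x
  rw [h1] at h2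
  have hxpos : (0:ℝ) < ‖x‖ ^ 2 := by
    have := norm_pos_iff.mpr hx0
    positivity
  exact le_of_mul_le_mul_right (by linarith) hxpos
end

section
/- (Kitaev's geometrical lemma for graphs.) Let G = (V,E) be a connected finite simple graph with |V| ≥ 2, let P be a nonempty proper subset of V, and define the penalized Laplacian Δ_P := Δ(G) + Σ_{v∈P} |v⟩⟨v|. Then λ_min(Δ_P) ≥ min{a(G), 1} · (1 − √(1 − |P|/|V|)) ≥ min{a(G), 1} · |P| / (2|V|) > 0; in particular λ_min(Δ_P) = Ω(1/|V|³). -/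
open Matrix BigOperators

/-- The (unordered) family of eigenvalues of the Laplacian of a finite simple graph. -/
noncomputable def lapEig {V : Type} [Fintype V] [DecidableEq V]
    (G : SimpleGraph V) [DecidableRel G.Adj] : V → ℝ :=
  (SimpleGraph.posSemidef_lapMatrix (R := ℝ) (G := G)).1.eigenvalues

/-- The algebraic connectivity `a(G)`: the second-smallest eigenvalue (with multiplicity) of
the Laplacian, expressed as the minimum over pairs of distinct indices of the larger of the
two corresponding eigenvalues. -/
noncomputable def algConn {V : Type} [Fintype V] [DecidableEq V]
    (G : SimpleGraph V) [DecidableRel G.Adj] : ℝ :=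
  ⨅ p : {p : V × V // p.1 ≠ p.2}, max (lapEig G p.1.1) (lapEig G p.1.2)

section AuxLemmas

variable {V : Type} [Fintype V] [DecidableEq V] (G : SimpleGraph V) [DecidableRel G.Adj]


lemma key_ineq (n m l A B SP SC : ℝ) (hm : 1 ≤ m) (hmn : m + 1 ≤ n)
    (hl0 : 0 ≤ l) (hl2 : l^2 = n*(n-m))
    (hA : 0 ≤ A) (hB : 0 ≤ B) (h1 : SP^2 ≤ m*A) (h2 : SC^2 ≤ (n-m)*B) :
    (SP+SC)^2 ≤ n*A + l*(A+B) := by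
  have hD : 0 < m * (n - m + l) := by nlinarith
  have k3 : 0 ≤ ((n-m+l)*SP - m*SC)^2 := sq_nonneg _
  have i2 : (n-m+l)*(n+l)*SP^2 ≤ (n-m+l)*(n+l)*(m*A) :=
    mul_le_mul_of_nonneg_left h1 (by nlinarith : (0:ℝ) ≤ (n-m+l)*(n+l))
  have i3 : m*(n+l)*SC^2 ≤ m*(n+l)*((n-m)*B) :=
    mul_le_mul_of_nonneg_left h2 (by nlinarith : (0:ℝ) ≤ m*(n+l))
  have i4 : l^2 * (m*B) = n*(n-m)*(m*B) := by rw [hl2]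
  have hgoal : m*(n-m+l)*(SP+SC)^2 ≤ m*(n-m+l)*(n*A + l*(A+B)) := by nlinarith [k3, i2, i3, i4]
  exact le_of_mul_le_mul_left (by linarith [hgoal]) hD

variable {V : Type} [Fintype V] [DecidableEq V] (G : SimpleGraph V) [DecidableRel G.Adj]


lemma lap_quad (hG : G.Connected) (hV : 2 ≤ Fintype.card V) :
    0 < algConn G ∧ ∀ x : V → ℝ,
      algConn G * (∑ v, x v ^ 2 - (∑ v, x v)^2 / (Fintype.card V : ℝ))
        ≤ x ⬝ᵥ (G.lapMatrix ℝ *ᵥ x) := by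
  classical
  have hcardpos : 0 < Fintype.card V := by omega
  obtain ⟨u⟩ : Nonempty V := Fintype.card_pos_iff.mp hcardpos
  have hcard : (0:ℝ) < Fintype.card V := by positivity
  have hPS := SimpleGraph.posSemidef_lapMatrix (R := ℝ) (G := G)
  set B := hPS.1.eigenvectorBasis with hBdef
  set lam := hPS.1.eigenvalues with hlamdef
  have hlapEig : lapEig G = lam := rfl
  have hlam0 : ∀ i, 0 ≤ lam i := hPS.eigenvalues_nonneg
  have horth : ∀ i j : V, ∑ v, (B i) v * (B j) v = if i = j then 1 else 0 := by
    intro i j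
    have h := orthonormal_iff_ite.mp B.orthonormal i j
    simpa [PiLp.inner_apply, RCLike.inner_apply, starRingEnd_apply, mul_comm] using h
  have heig : ∀ i, G.lapMatrix ℝ *ᵥ (B i : V → ℝ) = lam i • (B i : V → ℝ) :=
    fun i => hPS.1.mulVec_eigenvectorBasis i
  have hker : ∀ i, lam i = 0 → ∀ u v : V, (B i) u = (B i) v := by
    intro i h0 u v
    have h1 : G.lapMatrix ℝ *ᵥ (B i : V → ℝ) = 0 := by rw [heig i, h0, zero_smul]
    have h2 := (G.lapMatrix_mulVec_eq_zero_iff_forall_reachable (x := (B i : V → ℝ))).mp h1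
    exact h2 u v (hG.preconnected u v)
  have hdet : (G.lapMatrix ℝ).det = 0 := by
    rw [← Matrix.exists_mulVec_eq_zero_iff]
    exact ⟨fun _ => 1, fun h => one_ne_zero (congrFun h u),
      G.lapMatrix_mulVec_const_eq_zero⟩
  obtain ⟨i₀, -, h0⟩ : ∃ i ∈ Finset.univ, lam i = 0 := by
    apply Finset.prod_eq_zero_iff.mp
    have h := hPS.1.det_eq_prod_eigenvalues
    rw [hdet] at h
    simpa using h.symm
  have hpos : ∀ j, j ≠ i₀ → 0 < lam j := by
    intro j hj
    rcases lt_or_eq_of_le (hlam0 j) with h | h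
    · exact h
    exfalso
    have hconstj := hker j h.symm
    have hconst0 := hker i₀ h0
    have hz : ∑ v, (B j) v * (B i₀) v = 0 := by rw [horth j i₀, if_neg hj]
    have h1j : ∑ v, (B j) v * (B j) v = 1 := by rw [horth j j, if_pos rfl]
    have h10 : ∑ v, (B i₀) v * (B i₀) v = 1 := by rw [horth i₀ i₀, if_pos rfl]
    rw [Finset.sum_congr rfl (fun v _ => by rw [hconstj v u, hconst0 v u]), Finset.sum_const] at hz
    rw [Finset.sum_congr rfl (fun v _ => by rw [hconstj v u]), Finset.sum_const] at h1j
    rw [Finset.sum_congr rfl (fun v _ => by rw [hconst0 v u]), Finset.sum_const] at h10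
    simp only [Finset.card_univ, nsmul_eq_mul] at hz h1j h10
    have hzz : ((Fintype.card V : ℝ) * ((B j) u * (B i₀) u))^2 = 0 := by rw [hz]; ring
    nlinarith [hzz, h1j, h10]
  have hne : Nonempty {p : V × V // p.1 ≠ p.2} := by
    obtain ⟨a, b, hab⟩ := Fintype.exists_pair_of_one_lt_card (α := V) (by omega)
    exact ⟨⟨(a, b), hab⟩⟩
  have hbdd : BddBelow (Set.range fun p : {p : V × V // p.1 ≠ p.2} =>
      max (lapEig G p.1.1) (lapEig G p.1.2)) := (Set.finite_range _).bddBelow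
  have haconn_le : ∀ j, j ≠ i₀ → algConn G ≤ lam j := by
    intro j hj
    have := ciInf_le hbdd ⟨(j, i₀), hj⟩
    rwa [hlapEig, max_eq_left (h0 ▸ hlam0 j)] at this
  have hapos : 0 < algConn G := by
    obtain ⟨p₀, hp₀⟩ := Finite.exists_min
      (fun p : {p : V × V // p.1 ≠ p.2} => max (lapEig G p.1.1) (lapEig G p.1.2))
    have hlow : max (lapEig G p₀.1.1) (lapEig G p₀.1.2) ≤ algConn G := le_ciInf hp₀
    have : 0 < max (lapEig G p₀.1.1) (lapEig G p₀.1.2) := by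
      rcases ne_or_eq p₀.1.1 i₀ with h | h
      · exact lt_max_iff.mpr (Or.inl (hpos _ h))
      · exact lt_max_iff.mpr (Or.inr (hpos _ (fun hh => p₀.2 (h.trans hh.symm))))
    linarith
  refine ⟨hapos, fun x => ?_⟩
  set c : V → ℝ := fun i => ∑ w, (B i) w * x w with hc
  have hcrfl : ∀ i, ∑ w, (B i) w * x w = c i := fun i => rfl
  have hx : ∀ v, x v = ∑ i, c i * (B i) v := by
    intro v
    have h : ∑ i, B.repr (WithLp.toLp 2 x) i • B i = WithLp.toLp 2 x := B.sum_repr (WithLp.toLp 2 x)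
    have h2 : ∀ i, B.repr (WithLp.toLp 2 x) i = c i := by
      intro i
      rw [B.repr_apply_apply]
      simp [PiLp.inner_apply, RCLike.inner_apply, starRingEnd_apply, hc, mul_comm]
    have h3 : x v = ∑ i, B.repr (WithLp.toLp 2 x) i * (B i) v := by
      have := congrArg (fun y : EuclideanSpace ℝ V => y v) h
      simpa [WithLp.ofLp_sum, Finset.sum_apply] using this.symm
    rw [h3]
    exact Finset.sum_congr rfl fun i _ => by rw [h2]
  have hS : ∑ v, x v ^ 2 = ∑ i, c i ^ 2 := by
    calc ∑ v, x v ^ 2 = ∑ v, x v * ∑ i, c i * (B i) v := by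
          refine Finset.sum_congr rfl fun v _ => by rw [sq, ← hx v]
      _ = ∑ v, ∑ i, c i * (x v * (B i) v) := by
          refine Finset.sum_congr rfl fun v _ => by
            rw [Finset.mul_sum]; exact Finset.sum_congr rfl fun i _ => by ring
      _ = ∑ i, ∑ v, c i * (x v * (B i) v) := Finset.sum_comm
      _ = ∑ i, c i * ∑ v, (B i) v * x v := by
          refine Finset.sum_congr rfl fun i _ => by
            rw [Finset.mul_sum]; exact Finset.sum_congr rfl fun v _ => by ring
      _ = ∑ i, c i ^ 2 := by
          refine Finset.sum_congr rfl fun i _ => by rw [hcrfl i, sq]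
  have hQ : x ⬝ᵥ (G.lapMatrix ℝ *ᵥ x) = ∑ i, lam i * c i ^ 2 := by
    have hmv : ∀ v, (G.lapMatrix ℝ *ᵥ x) v = ∑ i, c i * (lam i * (B i) v) := by
      intro v
      calc (G.lapMatrix ℝ *ᵥ x) v = ∑ w, G.lapMatrix ℝ v w * x w := rfl
        _ = ∑ w, ∑ i, c i * (G.lapMatrix ℝ v w * (B i) w) := by
            refine Finset.sum_congr rfl fun w _ => by
              rw [hx w, Finset.mul_sum]; exact Finset.sum_congr rfl fun i _ => by ring
        _ = ∑ i, ∑ w, c i * (G.lapMatrix ℝ v w * (B i) w) := Finset.sum_comm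
        _ = ∑ i, c i * ∑ w, G.lapMatrix ℝ v w * (B i) w := by
            refine Finset.sum_congr rfl fun i _ => by rw [Finset.mul_sum]
        _ = ∑ i, c i * (lam i * (B i) v) := by
            refine Finset.sum_congr rfl fun i _ => by
              have h := congrFun (heig i) v
              rw [show (G.lapMatrix ℝ *ᵥ (B i : V → ℝ)) v
                  = ∑ w, G.lapMatrix ℝ v w * (B i) w from rfl] at h
              rw [h]; rfl
    calc x ⬝ᵥ (G.lapMatrix ℝ *ᵥ x) = ∑ v, x v * ∑ i, c i * (lam i * (B i) v) := by
          refine Finset.sum_congr rfl fun v _ => by rw [hmv v]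
      _ = ∑ v, ∑ i, lam i * c i * ((B i) v * x v) := by
          refine Finset.sum_congr rfl fun v _ => by
            rw [Finset.mul_sum]; exact Finset.sum_congr rfl fun i _ => by ring
      _ = ∑ i, ∑ v, lam i * c i * ((B i) v * x v) := Finset.sum_comm
      _ = ∑ i, lam i * c i * ∑ w, (B i) w * x w := by
          refine Finset.sum_congr rfl fun i _ => ?_
          conv_rhs => rw [Finset.mul_sum]
      _ = ∑ i, lam i * c i ^ 2 := by
          refine Finset.sum_congr rfl fun i _ => by rw [hcrfl i]; ring
  have hc0 : c i₀ ^ 2 = (∑ v, x v)^2 / (Fintype.card V : ℝ) := by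
    have e0 : ∀ v, (B i₀) v = (B i₀) u := fun v => hker i₀ h0 v u
    have h10 : ∑ v, (B i₀) v * (B i₀) v = 1 := by rw [horth i₀ i₀, if_pos rfl]
    rw [Finset.sum_congr rfl (fun v _ => by rw [e0 v]), Finset.sum_const] at h10
    simp only [Finset.card_univ, nsmul_eq_mul] at h10
    have hcv : c i₀ = (B i₀) u * ∑ v, x v := by
      rw [← hcrfl i₀, Finset.mul_sum]
      exact Finset.sum_congr rfl fun v _ => by rw [e0 v]
    rw [hcv]
    field_simp
    nlinarith [h10]
  rw [hQ, hS, ← hc0]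
  have hsplit : ∑ i, lam i * c i ^ 2 = ∑ i ∈ Finset.univ.erase i₀, lam i * c i ^ 2 := by
    rw [← Finset.add_sum_erase Finset.univ _ (Finset.mem_univ i₀), h0, zero_mul, zero_add]
  have hsplit2 : ∑ i, c i ^ 2 = c i₀ ^ 2 + ∑ i ∈ Finset.univ.erase i₀, c i ^ 2 := by
    rw [← Finset.add_sum_erase Finset.univ _ (Finset.mem_univ i₀)]
  rw [hsplit, hsplit2]
  have heq : algConn G * (c i₀ ^ 2 + ∑ i ∈ Finset.univ.erase i₀, c i ^ 2 - c i₀ ^ 2)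
      = ∑ i ∈ Finset.univ.erase i₀, algConn G * c i ^ 2 := by
    rw [← Finset.mul_sum]; ring_nf
  rw [heq]
  exact Finset.sum_le_sum fun i hi =>
    mul_le_mul_of_nonneg_right (haconn_le i (Finset.ne_of_mem_erase hi)) (sq_nonneg _)

lemma stdBasis_quad (P : Finset V) (x : V → ℝ) :
    x ⬝ᵥ ((∑ v ∈ P, Matrix.single v v (1 : ℝ)) *ᵥ x) = ∑ v ∈ P, x v ^ 2 := by
  have hM : ∀ i, ((∑ v ∈ P, Matrix.single v v (1 : ℝ)) *ᵥ x) i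
      = if i ∈ P then x i else 0 := by
    intro i
    simp [Matrix.mulVec, dotProduct, Matrix.sum_apply, Matrix.single,
      ite_and, Finset.sum_ite_eq, Finset.sum_ite_eq']
  simp only [dotProduct, hM, mul_ite, mul_zero]
  rw [Finset.sum_ite_mem, Finset.univ_inter]
  exact Finset.sum_congr rfl fun v _ => (sq (x v)).symm

end AuxLemmas

/-- **Kitaev's geometrical lemma for graphs.** For a connected finite simple
graph `G` on at least two vertices and a nonempty proper subset `P` of penalized vertices,
the penalized Laplacian `Δ_P = Δ(G) + Σ_{v∈P} |v⟩⟨v|` satisfies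
`λ_min(Δ_P) ≥ min{a(G),1}·(1 − √(1 − |P|/|V|)) ≥ min{a(G),1}·|P|/(2|V|) > 0`
(the first inequality being expressed via the quadratic form of the Hermitian matrix `Δ_P`). -/
theorem penalized_laplacian_lower_bound
    {V : Type} [Fintype V] [DecidableEq V]
    (G : SimpleGraph V) [DecidableRel G.Adj]
    (hG : G.Connected) (hV : 2 ≤ Fintype.card V)
    (P : Finset V) (hPne : P.Nonempty) (hPproper : P ≠ Finset.univ) :
    (0 < min (algConn G) 1 * ((P.card : ℝ) / (2 * Fintype.card V)))
    ∧ min (algConn G) 1 * ((P.card : ℝ) / (2 * Fintype.card V))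
        ≤ min (algConn G) 1
            * (1 - Real.sqrt (1 - (P.card : ℝ) / Fintype.card V))
    ∧ ∀ x : V → ℝ,
        min (algConn G) 1
            * (1 - Real.sqrt (1 - (P.card : ℝ) / Fintype.card V))
            * (∑ v, x v ^ 2)
          ≤ x ⬝ᵥ ((G.lapMatrix ℝ + ∑ v ∈ P, Matrix.single v v (1 : ℝ)) *ᵥ x) := by
  classical
  obtain ⟨hapos, hquad⟩ := lap_quad G hG hV
  set n : ℝ := (Fintype.card V : ℝ) with hn
  set m : ℝ := (P.card : ℝ) with hm
  have hcardlt : P.card < Fintype.card V :=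
    Finset.card_lt_card (Finset.ssubset_univ_iff.mpr hPproper)
  have hm1 : 1 ≤ m := by
    have := Finset.card_pos.mpr hPne
    rw [hm]; exact_mod_cast this
  have hmn : m + 1 ≤ n := by rw [hm, hn]; exact_mod_cast hcardlt
  have hnpos : (0:ℝ) < n := by positivity
  set cst : ℝ := min (algConn G) 1 with hcst
  have hcpos : 0 < cst := lt_min hapos one_pos
  set t : ℝ := Real.sqrt (1 - m / n) with ht
  have htnn : 0 ≤ t := Real.sqrt_nonneg _
  set l : ℝ := Real.sqrt (n * (n - m)) with hl
  have hl0 : 0 ≤ l := Real.sqrt_nonneg _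
  have hl2 : l ^ 2 = n * (n - m) := Real.sq_sqrt (by nlinarith)
  have hlt : l = n * t := by
    rw [hl, ht, show n * (n - m) = n ^ 2 * (1 - m / n) by field_simp,
      Real.sqrt_mul (sq_nonneg n), Real.sqrt_sq hnpos.le]
  -- part 2 : t ≤ 1 - m/(2n)
  have ht' : t ≤ 1 - m / (2 * n) := by
    have e1 : (1 - m / (2 * n)) ^ 2 - (1 - m / n) = (m / (2 * n)) ^ 2 := by
      field_simp; ring
    have h2 : 1 - m / n ≤ (1 - m / (2 * n)) ^ 2 := by nlinarith [sq_nonneg (m / (2 * n))]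
    calc t ≤ Real.sqrt ((1 - m / (2 * n)) ^ 2) := Real.sqrt_le_sqrt h2
      _ = 1 - m / (2 * n) := by
        apply Real.sqrt_sq
        have hdo : m / (2 * n) ≤ 1 := by
          rw [div_le_one (by positivity)]
          nlinarith
        linarith
  refine ⟨mul_pos hcpos (by positivity), ?_, ?_⟩
  · exact mul_le_mul_of_nonneg_left (by linarith) hcpos.le
  intro x
  set S : ℝ := ∑ v, x v ^ 2 with hS
  set Q : ℝ := ∑ v ∈ P, x v ^ 2 with hQ
  set T : ℝ := (∑ v, x v) ^ 2 with hT
  have hQnn : 0 ≤ Q := Finset.sum_nonneg fun v _ => sq_nonneg _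
  have hSnn : 0 ≤ S := Finset.sum_nonneg fun v _ => sq_nonneg _
  -- rewrite quadratic form
  rw [Matrix.add_mulVec, dotProduct_add, stdBasis_quad]
  -- T/n ≤ Q + t S
  have hCSP : (∑ v ∈ P, x v) ^ 2 ≤ m * Q := by
    have := sq_sum_le_card_mul_sum_sq (s := P) (f := x)
    exact_mod_cast this
  have hCSC : (∑ v ∈ Pᶜ, x v) ^ 2 ≤ (n - m) * ∑ v ∈ Pᶜ, x v ^ 2 := by
    have h := sq_sum_le_card_mul_sum_sq (s := Pᶜ) (f := x)
    have hc : ((Pᶜ.card : ℕ) : ℝ) = n - m := by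
      rw [Finset.card_compl, Nat.cast_sub hcardlt.le]
    calc (∑ v ∈ Pᶜ, x v) ^ 2 ≤ ((Pᶜ.card : ℕ) : ℝ) * ∑ v ∈ Pᶜ, x v ^ 2 := by exact_mod_cast h
      _ = (n - m) * ∑ v ∈ Pᶜ, x v ^ 2 := by rw [hc]
  have hsplitS : Q + ∑ v ∈ Pᶜ, x v ^ 2 = S := Finset.sum_add_sum_compl P _
  have hsplitT : ∑ v ∈ P, x v + ∑ v ∈ Pᶜ, x v = ∑ v, x v := Finset.sum_add_sum_compl P _
  have hkey : T ≤ n * Q + l * S := by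
    rw [hT, ← hsplitT, ← hsplitS]
    exact key_ineq n m l Q (∑ v ∈ Pᶜ, x v ^ 2) _ _ hm1 hmn hl0 hl2 hQnn
      (Finset.sum_nonneg fun v _ => sq_nonneg _) hCSP hCSC
  have hTn : T / n ≤ Q + t * S := by
    rw [div_le_iff₀ hnpos]
    calc T ≤ n * Q + l * S := hkey
      _ = (Q + t * S) * n := by rw [hlt]; ring
  -- S - T/n ≥ 0
  have hST : 0 ≤ S - T / n := by
    have h := sq_sum_le_card_mul_sum_sq (s := (Finset.univ : Finset V)) (f := x)
    have h' : T ≤ n * S := by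
      calc T ≤ ((Finset.univ : Finset V).card : ℝ) * S := by exact_mod_cast h
        _ = n * S := by rw [Finset.card_univ]
    have hdiv : T / n ≤ S := by rw [div_le_iff₀ hnpos]; linarith
    linarith
  have h1 : cst * (S - T / n) ≤ x ⬝ᵥ (G.lapMatrix ℝ *ᵥ x) :=
    le_trans (mul_le_mul_of_nonneg_right (min_le_left _ _) hST) (hquad x)
  have h2 : cst * Q ≤ Q := mul_le_of_le_one_left hQnn (min_le_right _ _)
  have h3 : cst * (T / n) ≤ cst * (Q + t * S) := mul_le_mul_of_nonneg_left hTn hcpos.le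
  nlinarith [h1, h2, h3]
end

section
/- (Fiedler.) Let G be a finite simple graph on at least two vertices. Then a(G) > 0 if and only if G is connected. -/
open Matrix BigOperators

/-- **Fiedler.** For a finite simple graph on at least two vertices, the
algebraic connectivity `a(G)` is positive if and only if `G` is connected. -/
theorem algConn_pos_iff_connected
    {V : Type} [Fintype V] [DecidableEq V]
    (G : SimpleGraph V) [DecidableRel G.Adj]
    (hV : 2 ≤ Fintype.card V) :
    0 < algConn G ↔ G.Connected := by
  classical
  have hne : Nonempty V := Fintype.card_pos_iff.mp (by omega)
  set e : V → ℝ := lapEig G with he_def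
  have he0 : ∀ i, 0 ≤ e i := fun i =>
    (SimpleGraph.posSemidef_lapMatrix (R := ℝ) (G := G)).eigenvalues_nonneg i
  -- Step A : card of zero eigenvalues = card of connected components
  have hrank : (G.lapMatrix ℝ).rank = Fintype.card {i // e i ≠ 0} :=
    (SimpleGraph.posSemidef_lapMatrix (R := ℝ) (G := G)).1.rank_eq_card_non_zero_eigs
  have hker : Fintype.card G.ConnectedComponent =
      Module.finrank ℝ (LinearMap.ker (Matrix.toLin' (G.lapMatrix ℝ))) :=
    SimpleGraph.card_connectedComponent_eq_finrank_ker_toLin'_lapMatrix G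
  rw [Matrix.toLin'_apply'] at hker
  have hrn : (G.lapMatrix ℝ).rank +
      Module.finrank ℝ (LinearMap.ker (G.lapMatrix ℝ).mulVecLin) = Fintype.card V := by
    have h1 := LinearMap.finrank_range_add_finrank_ker ((G.lapMatrix ℝ).mulVecLin)
    rw [Module.finrank_fintype_fun_eq_card] at h1
    exact h1
  have hle : Fintype.card {i // e i = 0} ≤ Fintype.card V := Fintype.card_subtype_le _
  simp only [ne_eq] at hrank
  have hsplit : Fintype.card {i // ¬ e i = 0} = Fintype.card V - Fintype.card {i // e i = 0} :=
    Fintype.card_subtype_compl _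
  haveI hccne : Nonempty G.ConnectedComponent := ⟨G.connectedComponentMk hne.some⟩
  have hcard : Fintype.card {i // e i = 0} = Fintype.card G.ConnectedComponent := by omega
  -- connected iff card of components = 1
  have hconn : G.Connected ↔ Fintype.card G.ConnectedComponent = 1 := by
    constructor
    · intro h
      have : Subsingleton G.ConnectedComponent :=
        h.preconnected.subsingleton_connectedComponent
      have : Fintype.card G.ConnectedComponent ≤ 1 := Fintype.card_le_one_iff_subsingleton.mpr this
      have hpos : 0 < Fintype.card G.ConnectedComponent := Fintype.card_pos
      omega
    · intro h
      rw [SimpleGraph.connected_iff]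
      refine ⟨fun u v => ?_, hne⟩
      have hs : Subsingleton G.ConnectedComponent :=
        Fintype.card_le_one_iff_subsingleton.mp (le_of_eq h)
      have := hs.elim (G.connectedComponentMk u) (G.connectedComponentMk v)
      exact (SimpleGraph.ConnectedComponent.eq).mp this
  have hcc_pos : 0 < Fintype.card G.ConnectedComponent := Fintype.card_pos
  -- Step B : positivity of algConn iff each pair has positive max
  have hidx : Nonempty {p : V × V // p.1 ≠ p.2} := by
    obtain ⟨a, b, hab⟩ := Fintype.exists_pair_of_one_lt_card (α := V) (by omega)
    exact ⟨⟨(a, b), hab⟩⟩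
  set f : {p : V × V // p.1 ≠ p.2} → ℝ := fun p => max (e p.1.1) (e p.1.2) with hf_def
  have hbdd : BddBelow (Set.range f) := (Set.finite_range f).bddBelow
  have hBpos : 0 < algConn G ↔ ∀ p, 0 < f p := by
    constructor
    · intro h p
      exact lt_of_lt_of_le h (ciInf_le hbdd p)
    · intro h
      obtain ⟨a, ha⟩ := Finite.exists_min f
      exact lt_of_lt_of_le (h a) (le_ciInf ha)
  -- Step C : each pair positive iff at most one zero eigenvalue
  have hC : (∀ p, 0 < f p) ↔ Fintype.card {i // e i = 0} ≤ 1 := by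
    constructor
    · intro h
      by_contra hc
      obtain ⟨⟨i, hi⟩, ⟨j, hj⟩, hij⟩ :=
        Fintype.exists_pair_of_one_lt_card (by omega : 1 < Fintype.card {i // e i = 0})
      have hij' : i ≠ j := fun h' => hij (Subtype.ext h')
      have := h ⟨(i, j), hij'⟩
      simp only [hf_def, hi, hj] at this
      simp at this
    · intro h p
      rcases lt_or_eq_of_le (he0 p.1.1) with h1 | h1
      · exact lt_max_of_lt_left h1
      rcases lt_or_eq_of_le (he0 p.1.2) with h2 | h2
      · exact lt_max_of_lt_right h2
      exfalso
      have hs : Subsingleton {i // e i = 0} := Fintype.card_le_one_iff_subsingleton.mp h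
      have := hs.elim ⟨p.1.1, h1.symm⟩ ⟨p.1.2, h2.symm⟩
      exact p.2 (congrArg Subtype.val this)
  rw [hBpos, hC, hconn]
  omega
end

section
/- (Fiedler.) Let L ≥ 2 and let G_L be the path graph on L vertices (vertices 1,…,L with edges {i, i+1} for 1 ≤ i ≤ L−1). Then a(G_L) = 2(1 − cos(π/L)). -/
open Matrix BigOperators
open scoped Classical

section PathGraphAux

open Polynomial

noncomputable section



def pBeta (L : ℕ) : ℝ := Real.pi / (2 * L)
def pMu (L k : ℕ) : ℝ := 2 - 2 * Real.cos (2 * k * pBeta L)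
def pV (L k j : ℕ) : ℝ := Real.cos ((2 * j + 1) * k * pBeta L)

lemma sum_ite_fin (L c : ℕ) (f : Fin L → ℝ) :
    (∑ j : Fin L, if c = j.val then f j else 0) = if h : c < L then f ⟨c, h⟩ else 0 := by
  split
  · next h =>
    rw [Finset.sum_eq_single (⟨c, h⟩ : Fin L)]
    · simp
    · intro j _ hj
      rw [if_neg]
      intro hc
      exact hj (by ext; simp [← hc])
    · simp
  · next h =>
    apply Finset.sum_eq_zero
    intro j _
    rw [if_neg]
    intro hc
    exact h (hc ▸ j.isLt)

lemma lap_apply (L : ℕ) (v : Fin L → ℝ) (i : Fin L) :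
    ((SimpleGraph.pathGraph L).lapMatrix ℝ *ᵥ v) i
      = (if h : i.val + 1 < L then v i - v ⟨i.val + 1, h⟩ else 0)
        + (if h : 0 < i.val then v i - v ⟨i.val - 1, by omega⟩ else 0) := by
  rw [SimpleGraph.lapMatrix_mulVec_apply]
  have hdeg : ((SimpleGraph.pathGraph L).degree i : ℝ) * v i
      = ∑ u ∈ (SimpleGraph.pathGraph L).neighborFinset i, v i := by
    rw [Finset.sum_const, nsmul_eq_mul, SimpleGraph.degree]
  rw [hdeg, ← Finset.sum_sub_distrib]
  rw [SimpleGraph.neighborFinset_eq_filter, Finset.sum_filter]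
  have key : ∀ j : Fin L, (if (SimpleGraph.pathGraph L).Adj i j then v i - v j else 0)
      = (if i.val + 1 = j.val then v i - v j else 0)
        + (if j.val + 1 = i.val then v i - v j else 0) := by
    intro j
    by_cases h1 : i.val + 1 = j.val
    · rw [if_pos h1, if_pos (SimpleGraph.pathGraph_adj.mpr (Or.inl h1)), if_neg (by omega)]
      ring
    · by_cases h2 : j.val + 1 = i.val
      · rw [if_pos h2, if_pos (SimpleGraph.pathGraph_adj.mpr (Or.inr h2)), if_neg h1]
        ring
      · rw [if_neg h1, if_neg h2, if_neg (fun h => by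
          rcases SimpleGraph.pathGraph_adj.mp h with h | h
          exacts [h1 h, h2 h])]
        ring
  rw [Finset.sum_congr rfl (fun j _ => key j), Finset.sum_add_distrib]
  congr 1
  · have := sum_ite_fin L (i.val + 1) (fun j => v i - v j)
    rw [this]
  · by_cases h : 0 < i.val
    · have hc : i.val - 1 < L := by omega
      rw [dif_pos h]
      have : ∀ j : Fin L, (if j.val + 1 = i.val then v i - v j else 0)
          = (if i.val - 1 = j.val then v i - v j else 0) := by
        intro j
        congr 1
        simp only [eq_iff_iff]
        omega
      rw [Finset.sum_congr rfl (fun j _ => this j), sum_ite_fin L (i.val - 1) (fun j => v i - v j),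
        dif_pos hc]
    · rw [dif_neg h]
      apply Finset.sum_eq_zero
      intro j _
      rw [if_neg (by omega)]

lemma eigen_apply (L : ℕ) (hL : 2 ≤ L) (k : ℕ) (hk : k < L) (i : Fin L) :
    ((SimpleGraph.pathGraph L).lapMatrix ℝ *ᵥ fun j : Fin L => pV L k (j : ℕ)) i
      = pMu L k * pV L k (i : ℕ) := by
  rw [lap_apply]
  have key : ∀ x : ℝ, Real.cos (x - 2*(k:ℝ)*pBeta L) + Real.cos (x + 2*(k:ℝ)*pBeta L)
      = 2 * Real.cos (2*(k:ℝ)*pBeta L) * Real.cos x := by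
    intro x; rw [Real.cos_sub, Real.cos_add]; ring
  have hμ : pMu L k = 2 - 2 * Real.cos (2*(k:ℝ)*pBeta L) := rfl
  have hv : ∀ j : ℕ, pV L k j = Real.cos ((2*(j:ℝ)+1)*(k:ℝ)*pBeta L) := fun j => rfl
  by_cases h0 : i.val = 0
  · have h1 : i.val + 1 < L := by omega
    rw [dif_pos h1, dif_neg (by omega)]
    simp only [hv, hμ, h0]
    push_cast
    have h2 := key ((2*(0:ℝ)+1)*(k:ℝ)*pBeta L)
    have h3 : Real.cos ((2*(0:ℝ)+1)*(k:ℝ)*pBeta L - 2*(k:ℝ)*pBeta L)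
        = Real.cos ((2*(0:ℝ)+1)*(k:ℝ)*pBeta L) := by
      rw [show (2*(0:ℝ)+1)*(k:ℝ)*pBeta L - 2*(k:ℝ)*pBeta L = -((2*(0:ℝ)+1)*(k:ℝ)*pBeta L) by ring,
        Real.cos_neg]
    have h4 : (2*(1:ℝ)+1)*(k:ℝ)*pBeta L = (2*(0:ℝ)+1)*(k:ℝ)*pBeta L + 2*(k:ℝ)*pBeta L := by ring
    rw [h4]
    linarith
  · by_cases hL1 : i.val = L - 1
    · have h1 : ¬ (i.val + 1 < L) := by omega
      have h2 : 0 < i.val := by omega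
      rw [dif_neg h1, dif_pos h2]
      simp only [hv, hμ, hL1]
      have c1 : ((L - 1 : ℕ) : ℝ) = (L : ℝ) - 1 := by
        rw [Nat.cast_sub (by omega)]; norm_num
      have c2 : ((L - 1 - 1 : ℕ) : ℝ) = (L : ℝ) - 2 := by
        rw [show L - 1 - 1 = L - 2 from rfl, Nat.cast_sub (by omega)]; norm_num
      rw [c1, c2]
      set θ : ℝ := (2*((L:ℝ)-1)+1)*(k:ℝ)*pBeta L with hθ
      have hkey := key θ
      have hlow : θ - 2*(k:ℝ)*pBeta L = (2*((L:ℝ)-2)+1)*(k:ℝ)*pBeta L := by rw [hθ]; ring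
      have hpi : 2*(L:ℝ)*pBeta L = Real.pi := by
        rw [pBeta]; field_simp
      have hup : Real.cos (θ + 2*(k:ℝ)*pBeta L) = Real.cos θ := by
        have e1 : θ + 2*(k:ℝ)*pBeta L = (k:ℝ)*(2*Real.pi) - θ := by
          rw [← hpi, hθ]; ring
        have hsin : Real.sin ((k:ℝ)*(2*Real.pi)) = 0 := by
          rw [show (k:ℝ)*(2*Real.pi) = ((2*k : ℕ):ℝ)*Real.pi by push_cast; ring]
          exact Real.sin_nat_mul_pi (2*k)
        have hcos : Real.cos ((k:ℝ)*(2*Real.pi)) = 1 := Real.cos_nat_mul_two_pi k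
        rw [e1, Real.cos_sub, hsin, hcos]
        ring
      rw [← hlow]
      linarith
    · have h1 : i.val + 1 < L := by omega
      have h2 : 0 < i.val := by omega
      rw [dif_pos h1, dif_pos h2]
      simp only [hv, hμ]
      have c1 : ((i.val + 1 : ℕ) : ℝ) = (i.val : ℝ) + 1 := by push_cast; ring
      have c2 : ((i.val - 1 : ℕ) : ℝ) = (i.val : ℝ) - 1 := by
        rw [Nat.cast_sub (by omega)]; norm_num
      rw [c1, c2]
      set θ : ℝ := (2*(i.val:ℝ)+1)*(k:ℝ)*pBeta L with hθ
      have hkey := key θ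
      have hlow : θ - 2*(k:ℝ)*pBeta L = (2*((i.val:ℝ)-1)+1)*(k:ℝ)*pBeta L := by rw [hθ]; ring
      have hup : θ + 2*(k:ℝ)*pBeta L = (2*((i.val:ℝ)+1)+1)*(k:ℝ)*pBeta L := by rw [hθ]; ring
      rw [← hlow, ← hup]
      linarith

lemma cos_sum_zero (L m : ℕ) (hL : 0 < L) (hm1 : 0 < m) (hm2 : m < 2*L) :
    ∑ j ∈ Finset.range L, Real.cos ((2*(j:ℝ)+1) * ((m:ℝ) * pBeta L)) = 0 := by
  set γ : ℝ := (m:ℝ) * pBeta L with hγ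
  have hLpos : (0:ℝ) < L := by exact_mod_cast hL
  have hβ : pBeta L = Real.pi / (2*L) := rfl
  have hγpos : 0 < γ := by
    rw [hγ, hβ]
    have : (0:ℝ) < m := by exact_mod_cast hm1
    positivity
  have hγlt : γ < Real.pi := by
    rw [hγ, hβ]
    have h1 : (m:ℝ) < 2*L := by exact_mod_cast hm2
    have h2 : (0:ℝ) < Real.pi/(2*L) := by positivity
    calc (m:ℝ) * (Real.pi/(2*L)) < 2*L * (Real.pi/(2*L)) := by nlinarith
      _ = Real.pi := by field_simp
  have hsin : Real.sin γ ≠ 0 := ne_of_gt (Real.sin_pos_of_pos_of_lt_pi hγpos hγlt)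
  have tele : ∀ j : ℕ, Real.sin (2*((j:ℝ)+1)*γ) - Real.sin (2*(j:ℝ)*γ)
      = 2 * Real.sin γ * Real.cos ((2*(j:ℝ)+1)*γ) := by
    intro j
    rw [show 2*((j:ℝ)+1)*γ = (2*(j:ℝ)+1)*γ + γ by ring,
      show 2*(j:ℝ)*γ = (2*(j:ℝ)+1)*γ - γ by ring, Real.sin_add, Real.sin_sub]
    ring
  have h := Finset.sum_range_sub (fun j : ℕ => Real.sin (2*(j:ℝ)*γ)) L
  push_cast at h
  rw [Finset.sum_congr rfl (fun j _ => tele j)] at h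
  have hend : Real.sin (2*(L:ℝ)*γ) = 0 := by
    rw [show 2*(L:ℝ)*γ = (m:ℝ)*Real.pi by rw [hγ, hβ]; field_simp]
    exact Real.sin_nat_mul_pi m
  rw [hend] at h
  norm_num at h
  rw [← Finset.mul_sum] at h
  rcases mul_eq_zero.mp h with h' | h'
  · exact absurd (by linarith : Real.sin γ = 0) hsin
  · exact h'

lemma pV_orth (L : ℕ) (hL : 0 < L) (k k' : ℕ) (hk : k < L) (hk' : k' < k) :
    ∑ j ∈ Finset.range L, pV L k j * pV L k' j = 0 := by
  have key : ∀ j : ℕ, 2 * (pV L k j * pV L k' j)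
      = Real.cos ((2*(j:ℝ)+1) * (((k+k' : ℕ):ℝ) * pBeta L))
        + Real.cos ((2*(j:ℝ)+1) * (((k-k' : ℕ):ℝ) * pBeta L)) := by
    intro j
    have c1 : ((k+k' : ℕ):ℝ) = (k:ℝ) + k' := by push_cast; ring
    have c2 : ((k-k' : ℕ):ℝ) = (k:ℝ) - k' := by
      rw [Nat.cast_sub (le_of_lt hk')]
    rw [c1, c2, pV, pV]
    rw [show (2*(j:ℝ)+1) * (((k:ℝ) + k') * pBeta L)
        = (2 * (j:ℝ) + 1) * (k:ℝ) * pBeta L + (2 * (j:ℝ) + 1) * (k':ℝ) * pBeta L by ring,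
      show (2*(j:ℝ)+1) * (((k:ℝ) - k') * pBeta L)
        = (2 * (j:ℝ) + 1) * (k:ℝ) * pBeta L - (2 * (j:ℝ) + 1) * (k':ℝ) * pBeta L by ring,
      Real.cos_add, Real.cos_sub]
    push_cast
    ring
  have h2 : ∑ j ∈ Finset.range L, (2 * (pV L k j * pV L k' j)) = 0 := by
    rw [Finset.sum_congr rfl (fun j _ => key j), Finset.sum_add_distrib,
      cos_sum_zero L (k+k') hL (by omega) (by omega),
      cos_sum_zero L (k-k') hL (by omega) (by omega)]
    norm_num
  rw [← Finset.mul_sum] at h2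
  linarith [h2]

lemma pV_norm (L : ℕ) (hL : 0 < L) (k : ℕ) (hk : k < L) (hk0 : 0 < k) :
    ∑ j ∈ Finset.range L, pV L k j * pV L k j = L / 2 := by
  have key : ∀ j : ℕ, 2 * (pV L k j * pV L k j)
      = Real.cos ((2*(j:ℝ)+1) * (((2*k : ℕ):ℝ) * pBeta L)) + 1 := by
    intro j
    rw [pV]
    have := Real.cos_sq ((2 * (j:ℝ) + 1) * (k:ℝ) * pBeta L)
    rw [show (2*(j:ℝ)+1) * (((2*k : ℕ):ℝ) * pBeta L)
        = 2 * ((2 * (j:ℝ) + 1) * (k:ℝ) * pBeta L) by push_cast; ring]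
    nlinarith [this]
  have h2 : ∑ j ∈ Finset.range L, (2 * (pV L k j * pV L k j)) = L := by
    rw [Finset.sum_congr rfl (fun j _ => key j), Finset.sum_add_distrib,
      cos_sum_zero L (2*k) hL (by omega) (by omega)]
    simp
  rw [← Finset.mul_sum] at h2
  linarith [h2]

lemma pV_zero (L j : ℕ) : pV L 0 j = 1 := by
  rw [pV]
  norm_num

lemma charpoly_conj' {n : Type*} [Fintype n] [DecidableEq n] (P Q A : Matrix n n ℝ)
    (h1 : P * Q = 1) (h2 : Q * P = 1) : (P * A * Q).charpoly = A.charpoly := by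
  have hmap : ∀ M N : Matrix n n ℝ, ((C : ℝ →+* ℝ[X]).mapMatrix (M * N))
      = (C : ℝ →+* ℝ[X]).mapMatrix M * (C : ℝ →+* ℝ[X]).mapMatrix N := fun M N => by
    exact RingHom.map_mul (C : ℝ →+* ℝ[X]).mapMatrix M N
  have hcm : charmatrix (P * A * Q)
      = (C : ℝ →+* ℝ[X]).mapMatrix P * charmatrix A * (C : ℝ →+* ℝ[X]).mapMatrix Q := by
    rw [charmatrix, charmatrix]
    rw [mul_sub, sub_mul]
    congr 1
    · -- Pmap * scalar X * Qmap = scalar X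
      symm
      have hc : (scalar n) (X : ℝ[X]) * (C : ℝ →+* ℝ[X]).mapMatrix Q
          = (C : ℝ →+* ℝ[X]).mapMatrix Q * (scalar n) (X : ℝ[X]) :=
        (Matrix.scalar_commute (X : ℝ[X]) (Commute.all _) _)
      rw [mul_assoc, hc, ← mul_assoc, ← hmap, h1]
      simp
    · rw [← hmap, ← hmap]
  rw [Matrix.charpoly, Matrix.charpoly, hcm, det_mul, det_mul]
  have hdet : ((C : ℝ →+* ℝ[X]).mapMatrix P).det * ((C : ℝ →+* ℝ[X]).mapMatrix Q).det = 1 := by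
    rw [← det_mul, ← hmap, h1]
    simp
  rw [mul_right_comm, hdet, one_mul]

lemma charpoly_diag {n : Type*} [Fintype n] [DecidableEq n] [LinearOrder n] (d : n → ℝ) :
    (Matrix.diagonal d).charpoly = ∏ i : n, (X - C (d i)) := by
  rw [Matrix.charpoly_of_upperTriangular _ (Matrix.blockTriangular_diagonal d)]
  simp

lemma multiset_eq_of_prod_eq {n : Type*} [Fintype n] (f g : n → ℝ)
    (h : ∏ i : n, (X - C (f i)) = ∏ i : n, (X - C (g i))) :
    Multiset.map f Finset.univ.val = Multiset.map g Finset.univ.val := by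
  have hf := Polynomial.roots_multiset_prod_X_sub_C (Multiset.map f Finset.univ.val)
  have hg := Polynomial.roots_multiset_prod_X_sub_C (Multiset.map g Finset.univ.val)
  rw [← hf, ← hg]
  congr 1
  rw [Multiset.map_map, Multiset.map_map]
  rw [← Finset.prod_eq_multiset_prod, ← Finset.prod_eq_multiset_prod] at *
  exact h

def pP (L : ℕ) : Matrix (Fin L) (Fin L) ℝ := Matrix.of fun j k => pV L k.val j.val
def pD (L : ℕ) : Matrix (Fin L) (Fin L) ℝ := Matrix.diagonal (fun k : Fin L => pMu L k.val)

lemma AP_PD (L : ℕ) (hL : 2 ≤ L) :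
    (SimpleGraph.pathGraph L).lapMatrix ℝ * pP L = pP L * pD L := by
  ext i k
  rw [Matrix.mul_apply, pD, Matrix.mul_diagonal]
  have h := eigen_apply L hL k.val k.isLt i
  simp only [Matrix.mulVec, dotProduct] at h
  simp only [pP, Matrix.of_apply]
  rw [h]
  ring

lemma PtP (L : ℕ) (hL : 0 < L) :
    (pP L)ᵀ * pP L = Matrix.diagonal (fun k : Fin L => if k.val = 0 then (L:ℝ) else L/2) := by
  ext k k'
  rw [Matrix.mul_apply]
  simp only [pP, Matrix.transpose_apply, Matrix.of_apply]
  by_cases hkk : k = k'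
  · subst hkk
    rw [Matrix.diagonal_apply_eq]
    rw [Fin.sum_univ_eq_sum_range (fun j => pV L k.val j * pV L k.val j)]
    by_cases h0 : k.val = 0
    · rw [if_pos h0, h0]
      simp [pV_zero]
    · rw [if_neg h0, pV_norm L hL k.val k.isLt (by omega)]
  · rw [Matrix.diagonal_apply_ne _ hkk]
    have hne : k.val ≠ k'.val := fun h => hkk (Fin.ext h)
    rcases lt_or_gt_of_ne hne with h | h
    · rw [Fin.sum_univ_eq_sum_range (fun j => pV L k.val j * pV L k'.val j)]
      have := pV_orth L hL k'.val k.val k'.isLt h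
      rw [← this]
      apply Finset.sum_congr rfl
      intro j _
      ring
    · rw [Fin.sum_univ_eq_sum_range (fun j => pV L k.val j * pV L k'.val j)]
      exact pV_orth L hL k.val k'.val k.isLt h

lemma pP_det_ne (L : ℕ) (hL : 0 < L) : (pP L).det ≠ 0 := by
  have h := congrArg Matrix.det (PtP L hL)
  rw [Matrix.det_mul, Matrix.det_transpose, Matrix.det_diagonal] at h
  have hpos : 0 < ∏ k : Fin L, (if (k : ℕ) = 0 then (L:ℝ) else L/2) := by
    apply Finset.prod_pos
    intro k _
    have : (0:ℝ) < L := by exact_mod_cast hL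
    split <;> linarith
  intro h0
  rw [h0] at h
  simp at h
  rw [← h] at hpos
  exact lt_irrefl 0 hpos

lemma charpoly_eq (L : ℕ) (hL : 2 ≤ L) :
    ((SimpleGraph.pathGraph L).lapMatrix ℝ).charpoly = (pD L).charpoly := by
  have hu : IsUnit (pP L).det := isUnit_iff_ne_zero.mpr (pP_det_ne L (by omega))
  have h1 : pP L * (pP L)⁻¹ = 1 := Matrix.mul_nonsing_inv _ hu
  have h2 : (pP L)⁻¹ * pP L = 1 := Matrix.nonsing_inv_mul _ hu
  have hA : (SimpleGraph.pathGraph L).lapMatrix ℝ = pP L * pD L * (pP L)⁻¹ := by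
    rw [← AP_PD L hL, Matrix.mul_assoc, h1, Matrix.mul_one]
  rw [hA, charpoly_conj' _ _ _ h1 h2]

lemma lapEig_multiset (L : ℕ) (hL : 2 ≤ L) :
    Multiset.map ((SimpleGraph.posSemidef_lapMatrix (R := ℝ)
        (G := SimpleGraph.pathGraph L)).1.eigenvalues) Finset.univ.val
      = Multiset.map (fun k : Fin L => pMu L k.val) Finset.univ.val := by
  set hA := (SimpleGraph.posSemidef_lapMatrix (R := ℝ) (G := SimpleGraph.pathGraph L)).1 with hhA
  have hspec := hA.spectral_theorem
  rw [RCLike.ofReal_real_eq_id] at hspec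
  have h1 : (hA.eigenvectorUnitary : Matrix (Fin L) (Fin L) ℝ)
      * star (hA.eigenvectorUnitary : Matrix (Fin L) (Fin L) ℝ) = 1 :=
    Matrix.mem_unitaryGroup_iff.mp hA.eigenvectorUnitary.2
  have h2 : star (hA.eigenvectorUnitary : Matrix (Fin L) (Fin L) ℝ)
      * (hA.eigenvectorUnitary : Matrix (Fin L) (Fin L) ℝ) = 1 :=
    Matrix.mem_unitaryGroup_iff'.mp hA.eigenvectorUnitary.2
  have hc1 : ((SimpleGraph.pathGraph L).lapMatrix ℝ).charpoly
      = (Matrix.diagonal (id ∘ hA.eigenvalues)).charpoly := by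
    conv_lhs => rw [hspec]
    exact charpoly_conj' _ _ _ h1 h2
  have hc2 := charpoly_eq L hL
  apply multiset_eq_of_prod_eq
  rw [← charpoly_diag, ← charpoly_diag]
  simp only [Function.id_comp] at hc1
  rw [← hc1, hc2]
  rfl

lemma pMu_zero (L : ℕ) : pMu L 0 = 0 := by
  simp [pMu]

lemma pBeta_pos (L : ℕ) (hL : 0 < L) : 0 < pBeta L := by
  have : (0:ℝ) < L := by exact_mod_cast hL
  rw [pBeta]
  positivity

lemma pMu_one_pos (L : ℕ) (hL : 2 ≤ L) : 0 < pMu L 1 := by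
  have hL0 : (0:ℝ) < L := by exact_mod_cast (by omega : 0 < L)
  have h1 : (0:ℝ) < 2 * (1:ℕ) * pBeta L := by
    have := pBeta_pos L (by omega)
    push_cast
    linarith
  have h2 : 2 * ((1:ℕ):ℝ) * pBeta L ≤ Real.pi := by
    rw [pBeta]
    push_cast
    rw [show 2 * (1:ℝ) * (Real.pi / (2 * L)) = Real.pi / L by field_simp]
    rw [div_le_iff₀ hL0]
    have hL1 : (1:ℝ) ≤ L := by exact_mod_cast (by omega : 1 ≤ L)
    nlinarith [Real.pi_pos]
  have := Real.cos_lt_cos_of_nonneg_of_le_pi (le_refl 0) h2 h1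
  rw [Real.cos_zero] at this
  rw [pMu]
  push_cast at this ⊢
  linarith

lemma pMu_one_le (L k : ℕ) (hL : 2 ≤ L) (hk0 : 0 < k) (hk : k < L) : pMu L 1 ≤ pMu L k := by
  have hL0 : (0:ℝ) < L := by exact_mod_cast (by omega : 0 < L)
  have hb := pBeta_pos L (by omega)
  have hk1 : (1:ℝ) ≤ (k:ℝ) := by exact_mod_cast hk0
  have hkL : (k:ℝ) ≤ (L:ℝ) := by exact_mod_cast (le_of_lt hk)
  have h1 : (0:ℝ) ≤ 2 * ((1:ℕ):ℝ) * pBeta L := by push_cast; linarith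
  have h2 : 2 * (k:ℝ) * pBeta L ≤ Real.pi := by
    rw [pBeta]
    rw [show 2 * (k:ℝ) * (Real.pi / (2 * L)) = (k:ℝ) * Real.pi / L by field_simp]
    rw [div_le_iff₀ hL0]
    nlinarith [Real.pi_pos]
  have h3 : 2 * ((1:ℕ):ℝ) * pBeta L ≤ 2 * (k:ℝ) * pBeta L := by push_cast; nlinarith
  have := Real.cos_le_cos_of_nonneg_of_le_pi h1 h2 h3
  rw [pMu, pMu]
  linarith


end
end PathGraphAux

/-- **Fiedler.** The algebraic connectivity of the path graph on `L ≥ 2`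
vertices equals `2(1 − cos(π/L))`. -/
theorem algConn_pathGraph (L : ℕ) (hL : 2 ≤ L) :
    algConn (SimpleGraph.pathGraph L) = 2 * (1 - Real.cos (Real.pi / L)) := by
  have hL0 : 0 < L := by omega
  have hLr : (0:ℝ) < L := by exact_mod_cast hL0
  set e := lapEig (SimpleGraph.pathGraph L) with he
  have hME : Multiset.map e Finset.univ.val
      = Multiset.map (fun k : Fin L => pMu L k.val) Finset.univ.val := lapEig_multiset L hL
  have hval : 2 * (1 - Real.cos (Real.pi / L)) = pMu L 1 := by
    rw [pMu, pBeta]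
    rw [show 2 * ((1:ℕ):ℝ) * (Real.pi / (2 * L)) = Real.pi / L by push_cast; field_simp]
    ring
  have hpos := pMu_one_pos L hL
  -- classification
  have hclass : ∀ x ∈ Multiset.map e Finset.univ.val, x = 0 ∨ pMu L 1 ≤ x := by
    rw [hME]
    intro x hx
    obtain ⟨k, _, rfl⟩ := Multiset.mem_map.mp hx
    by_cases h0 : k.val = 0
    · left; rw [h0, pMu_zero]
    · right; exact pMu_one_le L k.val hL (by omega) k.isLt
  -- count of zero
  have hcount : Multiset.count 0 (Multiset.map e Finset.univ.val) = 1 := by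
    rw [hME, Multiset.count_map]
    have hfe : Multiset.filter (fun a : Fin L => 0 = pMu L a.val) Finset.univ.val
        = (Finset.filter (fun a : Fin L => 0 = pMu L a.val) Finset.univ).val := by
      rw [Finset.filter_val]
    rw [hfe]
    have : Finset.filter (fun a : Fin L => 0 = pMu L a.val) Finset.univ = {⟨0, hL0⟩} := by
      ext k
      simp only [Finset.mem_filter, Finset.mem_univ, true_and, Finset.mem_singleton]
      constructor
      · intro h
        by_contra hk
        have hkv : k.val ≠ 0 := by
          intro hv; exact hk (Fin.ext hv)
        have := pMu_one_le L k.val hL (by omega) k.isLt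
        linarith
      · intro h
        rw [h]
        simp [pMu_zero]
    rw [this]
    rfl
  -- memberships
  have h0mem : (0:ℝ) ∈ Multiset.map e Finset.univ.val := by
    rw [hME]
    apply Multiset.mem_map.mpr
    exact ⟨⟨0, hL0⟩, Finset.mem_univ_val _, pMu_zero L⟩
  have h1mem : pMu L 1 ∈ Multiset.map e Finset.univ.val := by
    rw [hME]
    apply Multiset.mem_map.mpr
    exact ⟨⟨1, by omega⟩, Finset.mem_univ_val _, rfl⟩
  obtain ⟨i0, _, hi0⟩ := Multiset.mem_map.mp h0mem
  obtain ⟨i1, _, hi1⟩ := Multiset.mem_map.mp h1mem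
  have hne : i0 ≠ i1 := by
    intro h
    rw [h, hi1] at hi0
    exact (ne_of_gt hpos) hi0
  haveI : Nonempty {p : Fin L × Fin L // p.1 ≠ p.2} := ⟨⟨(i0, i1), hne⟩⟩
  rw [hval]
  have hbdd : BddBelow (Set.range fun p : {p : Fin L × Fin L // p.1 ≠ p.2} =>
      max (e p.1.1) (e p.1.2)) := Set.Finite.bddBelow (Set.finite_range _)
  apply le_antisymm
  · have h := ciInf_le hbdd (⟨(i0, i1), hne⟩ : {p : Fin L × Fin L // p.1 ≠ p.2})
    simp only at h
    rw [hi0, hi1, max_eq_right hpos.le] at h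
    exact h
  · apply le_ciInf
    rintro ⟨⟨p1, p2⟩, hp⟩
    by_contra hlt
    push_neg at hlt
    simp only [max_lt_iff] at hlt
    obtain ⟨hlt1, hlt2⟩ := hlt
    have hm1 : e p1 ∈ Multiset.map e Finset.univ.val :=
      Multiset.mem_map.mpr ⟨p1, Finset.mem_univ_val _, rfl⟩
    have hm2 : e p2 ∈ Multiset.map e Finset.univ.val :=
      Multiset.mem_map.mpr ⟨p2, Finset.mem_univ_val _, rfl⟩
    have hz1 : e p1 = 0 := by
      rcases hclass _ hm1 with h | h
      · exact h
      · linarith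
    have hz2 : e p2 = 0 := by
      rcases hclass _ hm2 with h | h
      · exact h
      · linarith
    have hsub : (p1 ::ₘ {p2} : Multiset (Fin L)) ≤ Finset.univ.val := by
      rw [Multiset.le_iff_count]
      intro a
      rw [Multiset.count_univ]
      rw [Multiset.count_cons, Multiset.count_singleton]
      have : ¬ (a = p1 ∧ a = p2) := by
        rintro ⟨h1, h2⟩
        exact hp (h1 ▸ h2 ▸ rfl)
      split_ifs <;> omega
    have hle := Multiset.count_le_of_le 0 (Multiset.map_le_map (f := e) hsub)
    rw [hcount] at hle
    simp [hz1, hz2] at hle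
end

section
/- Let G be a connected finite simple graph on L ≥ 2 vertices. Then a(G) ≥ 2(1 − cos(π/L)); in particular a(G) = Ω(1/L²). -/
open Matrix BigOperators

open Finset

noncomputable def cw (m : ℕ) : ℂ := Complex.exp (2 * Real.pi * Complex.I / m)

lemma geom_ortho (m : ℕ) (hm : 1 ≤ m) (r : ℕ) :
    (∑ j ∈ Finset.range m, (cw m ^ r) ^ j) = if r % m = 0 then (m : ℂ) else 0 := by
  have hprim : IsPrimitiveRoot (cw m) m := Complex.isPrimitiveRoot_exp m (by omega)
  by_cases h : r % m = 0
  · have h1 : cw m ^ r = 1 := by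
      rw [hprim.pow_eq_one_iff_dvd]
      exact Nat.dvd_of_mod_eq_zero h
    simp [h1, h]
  · have hne : cw m ^ r ≠ 1 := by
      rw [Ne, hprim.pow_eq_one_iff_dvd]
      exact fun hd => h (Nat.mod_eq_zero_of_dvd hd)
    rw [geom_sum_eq hne]
    have h2 : (cw m ^ r) ^ m = 1 := by
      rw [← pow_mul, mul_comm r m, pow_mul, hprim.pow_eq_one, one_pow]
    simp [h2, h]

lemma key_sum (m : ℕ) (hm : 1 ≤ m) (z : ℕ → ℝ) (t : ℕ) :
    ∑ j ∈ Finset.range m, cw m ^ (t*j) *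
        ((∑ k ∈ Finset.range m, (z k : ℂ) * cw m ^ (j*k)) *
          (starRingEnd ℂ) (∑ k ∈ Finset.range m, (z k : ℂ) * cw m ^ (j*k)))
      = (m : ℂ) * ∑ k ∈ Finset.range m, (z k : ℂ) * z ((k + t) % m) := by
  haveI : NeZero m := ⟨by omega⟩
  have hprim : IsPrimitiveRoot (cw m) m := Complex.isPrimitiveRoot_exp m (by omega)
  have hω0 : cw m ≠ 0 := Complex.exp_ne_zero _
  have hωm : cw m ^ m = 1 := hprim.pow_eq_one
  have hω' : cw m = Complex.exp ((2*Real.pi/m : ℝ) * Complex.I) := by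
    unfold cw; congr 1; push_cast; ring
  have habs : ‖cw m‖ = 1 := by
    rw [hω']; exact Complex.norm_exp_ofReal_mul_I _
  have hconj : (starRingEnd ℂ) (cw m) = cw m ^ (m-1) := by
    have h1 : cw m * (starRingEnd ℂ) (cw m) = 1 := by
      rw [Complex.mul_conj, Complex.normSq_eq_norm_sq, habs]; norm_num
    have h2 : cw m * cw m ^ (m-1) = 1 := by
      rw [← pow_succ', Nat.sub_add_cancel hm]; exact hωm
    exact mul_left_cancel₀ hω0 (h1.trans h2.symm)
  have hml : ((m-1 : ℕ) : ZMod m) = -1 := by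
    have h : (((m-1) + 1 : ℕ) : ZMod m) = 0 := by
      rw [Nat.sub_add_cancel hm, ZMod.natCast_self]
    push_cast at h
    linear_combination h
  have hcond : ∀ k, ∀ l < m, ((t + k + (m-1)*l) % m = 0 ↔ l = (k + t) % m) := by
    intro k l hl
    have step1 : (t + k + (m-1)*l) % m = 0 ↔ ((t + k + (m-1)*l : ℕ) : ZMod m) = 0 := by
      rw [ZMod.natCast_eq_zero_iff]
      exact ⟨Nat.dvd_of_mod_eq_zero, Nat.mod_eq_zero_of_dvd⟩
    have step2 : ((t + k + (m-1)*l : ℕ) : ZMod m) = 0 ↔ ((l : ℕ) : ZMod m) = ((k + t : ℕ) : ZMod m) := by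
      rw [Nat.cast_add, Nat.cast_add, Nat.cast_mul, hml, Nat.cast_add]
      constructor
      · intro h; linear_combination -h
      · intro h; linear_combination -h
    have step3 : ((l : ℕ) : ZMod m) = ((k + t : ℕ) : ZMod m) ↔ l = (k + t) % m := by
      constructor
      · intro h
        have := congrArg ZMod.val (h.trans (ZMod.natCast_mod (k+t) m).symm)
        rwa [ZMod.val_cast_of_lt hl, ZMod.val_cast_of_lt (Nat.mod_lt _ (by omega))] at this
      · intro h; rw [h, ZMod.natCast_mod]
    rw [step1, step2, step3]
  have expand : ∀ j ∈ Finset.range m, cw m ^ (t*j) *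
        ((∑ k ∈ Finset.range m, (z k : ℂ) * cw m ^ (j*k)) *
          (starRingEnd ℂ) (∑ k ∈ Finset.range m, (z k : ℂ) * cw m ^ (j*k)))
      = ∑ k ∈ Finset.range m, ∑ l ∈ Finset.range m,
          (z k : ℂ) * z l * (cw m ^ (t + k + (m-1)*l)) ^ j := by
    intro j _
    rw [_root_.map_sum, Finset.sum_mul_sum, Finset.mul_sum]
    refine Finset.sum_congr rfl fun k _ => ?_
    rw [Finset.mul_sum]
    refine Finset.sum_congr rfl fun l _ => ?_
    rw [_root_.map_mul, _root_.map_pow, hconj, Complex.conj_ofReal, ← pow_mul, ← pow_mul]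
    rw [show (t + k + (m-1)*l) * j = t*j + (j*k + (m-1)*(j*l)) by ring, pow_add, pow_add]
    ring
  rw [Finset.sum_congr rfl expand, Finset.sum_comm, Finset.mul_sum]
  refine Finset.sum_congr rfl fun k hk => ?_
  rw [Finset.sum_comm]
  have inner : ∀ l ∈ Finset.range m,
      (∑ j ∈ Finset.range m, (z k : ℂ) * z l * (cw m ^ (t + k + (m-1)*l)) ^ j)
      = (z k : ℂ) * z l * (if (t + k + (m-1)*l) % m = 0 then (m:ℂ) else 0) := by
    intro l _
    rw [← Finset.mul_sum, geom_ortho m hm]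
  rw [Finset.sum_congr rfl inner]
  rw [Finset.sum_eq_single_of_mem ((k+t) % m)
      (Finset.mem_range.mpr (Nat.mod_lt _ (by omega)))]
  · rw [if_pos ((hcond k _ (Nat.mod_lt _ (by omega))).mpr rfl)]
    push_cast
    ring
  · intro l hl hne
    rw [if_neg (fun hc => hne ((hcond k l (Finset.mem_range.mp hl)).mp hc)), mul_zero]

lemma cw_pow_re (m : ℕ) (hm : 1 ≤ m) (j : ℕ) :
    (cw m ^ j).re = Real.cos (2*Real.pi*j/m) := by
  have hω' : cw m = Complex.exp ((2*Real.pi/m : ℝ) * Complex.I) := by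
    unfold cw; congr 1; push_cast; ring
  rw [hω', ← Complex.exp_nat_mul]
  have : (j:ℂ) * (((2*Real.pi/m : ℝ)) * Complex.I) = ((2*Real.pi*j/m : ℝ)) * Complex.I := by
    push_cast; ring
  rw [this, Complex.exp_ofReal_mul_I_re]

lemma cos_le_cos_of_range (m : ℕ) (j : ℕ) (h1 : 1 ≤ j) (h2 : j < m) :
    Real.cos (2*Real.pi*j/m) ≤ Real.cos (2*Real.pi/m) := by
  have hmpos : (0:ℝ) < m := by
    have : 0 < m := by omega
    exact_mod_cast this
  have hj1 : (1:ℝ) ≤ j := by exact_mod_cast h1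
  have hjm : (j:ℝ) + 1 ≤ m := by exact_mod_cast h2
  have hfrac0 : 0 ≤ 2*Real.pi/m := by positivity
  by_cases hcase : 2*Real.pi*j/m ≤ Real.pi
  · apply Real.cos_le_cos_of_nonneg_of_le_pi hfrac0 hcase
    rw [div_le_div_iff₀ hmpos hmpos]
    nlinarith [Real.pi_pos, mul_le_mul_of_nonneg_right hj1 hmpos.le]
  · push_neg at hcase
    rw [← Real.cos_two_pi_sub]
    apply Real.cos_le_cos_of_nonneg_of_le_pi hfrac0 (by linarith)
    have e : 2*Real.pi - 2*Real.pi*j/m = 2*Real.pi*(m - j)/m := by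
      field_simp
    rw [e, div_le_div_iff₀ hmpos hmpos]
    nlinarith [Real.pi_pos, mul_le_mul_of_nonneg_right (show (1:ℝ) ≤ (m:ℝ) - j by linarith) hmpos.le]

lemma cycle_wirtinger (m : ℕ) (hm : 1 ≤ m) (z : ℕ → ℝ) (hzm : z m = z 0)
    (h0 : ∑ k ∈ Finset.range m, z k = 0) :
    2*(1 - Real.cos (2*Real.pi/m)) * ∑ k ∈ Finset.range m, z k ^ 2
      ≤ ∑ k ∈ Finset.range m, (z (k+1) - z k)^2 := by
  set S : ℝ := ∑ k ∈ Finset.range m, z k ^ 2 with hS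
  set C : ℝ := ∑ k ∈ Finset.range m, z k * z (k+1) with hC
  set NS : ℕ → ℝ := fun j => Complex.normSq (∑ k ∈ Finset.range m, (z k : ℂ) * cw m ^ (j*k))
    with hNS
  -- Parseval
  have hk0 := key_sum m hm z 0
  have P1 : ∑ j ∈ Finset.range m, NS j = m * S := by
    have e1 : ∀ k ∈ Finset.range m, (z k : ℂ) * z ((k + 0) % m) = ((z k ^ 2 : ℝ) : ℂ) := by
      intro k hk
      rw [add_zero, Nat.mod_eq_of_lt (Finset.mem_range.mp hk)]
      push_cast; ring
    rw [Finset.sum_congr rfl e1] at hk0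
    simp only [Nat.zero_mul, pow_zero, one_mul, Complex.mul_conj] at hk0
    exact_mod_cast hk0
  -- correlation identity
  have hk1 := key_sum m hm z 1
  have P2 : ∑ j ∈ Finset.range m, Real.cos (2*Real.pi*j/m) * NS j = m * C := by
    have e1 : ∀ k ∈ Finset.range m, (z k : ℂ) * z ((k + 1) % m) = ((z k * z (k+1) : ℝ) : ℂ) := by
      intro k hk
      have hk' := Finset.mem_range.mp hk
      by_cases h : k + 1 < m
      · rw [Nat.mod_eq_of_lt h]; push_cast; ring
      · have hkm : k + 1 = m := by omega
        rw [hkm, Nat.mod_self, ← hkm, hkm, hzm]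
        push_cast; ring
    rw [Finset.sum_congr rfl e1] at hk1
    simp only [one_mul, Complex.mul_conj] at hk1
    have := congrArg Complex.re hk1
    simp only [Complex.re_sum, Complex.mul_re, Complex.ofReal_re, Complex.ofReal_im,
      Complex.natCast_re, Complex.natCast_im, mul_zero, sub_zero, Complex.mul_im,
      zero_mul, add_zero] at this
    rw [← this]
    refine Finset.sum_congr rfl fun j _ => ?_
    rw [cw_pow_re m hm j]
  -- zero mode vanishes
  have hz0 : NS 0 = 0 := by
    have : (∑ k ∈ Finset.range m, (z k : ℂ) * cw m ^ (0*k)) = 0 := by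
      simp only [Nat.zero_mul, pow_zero, mul_one]
      exact_mod_cast congrArg (fun r : ℝ => (r : ℂ)) h0
    rw [hNS]
    simp only [this, _root_.map_zero]
  -- bound the correlation
  have hCb : (m:ℝ) * C ≤ (m:ℝ) * (Real.cos (2*Real.pi/m) * S) := by
    have e2 : (m:ℝ) * (Real.cos (2*Real.pi/m) * S) = Real.cos (2*Real.pi/m) * ∑ j ∈ Finset.range m, NS j := by
      rw [P1]; ring
    rw [← P2, e2, Finset.mul_sum]
    refine Finset.sum_le_sum fun j hj => ?_
    rcases Nat.eq_zero_or_pos j with h | h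
    · subst h; rw [hz0]; simp
    · exact mul_le_mul_of_nonneg_right
        (cos_le_cos_of_range m j h (Finset.mem_range.mp hj)) (Complex.normSq_nonneg _)
  have hCb' : C ≤ Real.cos (2*Real.pi/m) * S :=
    le_of_mul_le_mul_left (by exact_mod_cast hCb) (by exact_mod_cast Nat.pos_of_ne_zero (by omega))
  -- expand the RHS
  have a1 : ∑ k ∈ Finset.range (m+1), z k ^ 2 = (∑ k ∈ Finset.range m, z (k+1) ^ 2) + z 0 ^ 2 :=
    Finset.sum_range_succ' _ m
  have a2 : ∑ k ∈ Finset.range (m+1), z k ^ 2 = S + z m ^ 2 := Finset.sum_range_succ _ m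
  have hshift : ∑ k ∈ Finset.range m, z (k+1) ^ 2 = S := by
    rw [hzm] at a2; linarith
  have expand2 : ∑ k ∈ Finset.range m, (z (k+1) - z k)^2 = 2*S - 2*C := by
    have e : ∀ k ∈ Finset.range m, (z (k+1) - z k)^2
        = z (k+1)^2 + z k ^2 - 2*(z k * z (k+1)) := fun k _ => by ring
    rw [Finset.sum_congr rfl e, Finset.sum_sub_distrib, Finset.sum_add_distrib, hshift,
      ← Finset.mul_sum, ← hS, ← hC]
    ring
  rw [expand2]
  linarith

lemma path_wirtinger (n : ℕ) (hn : 2 ≤ n) (y : ℕ → ℝ)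
    (h0 : ∑ k ∈ Finset.range n, y k = 0) :
    2*(1 - Real.cos (Real.pi/n)) * ∑ k ∈ Finset.range n, y k ^ 2
      ≤ ∑ k ∈ Finset.range (n-1), (y (k+1) - y k)^2 := by
  set z : ℕ → ℝ := fun k => if k < n then y k else y (2*n - 1 - k) with hz
  have hz1 : ∀ k, k < n → z k = y k := fun k hk => by simp [hz, hk]
  have hz2 : ∀ k, n ≤ k → z k = y (2*n - 1 - k) := fun k hk => by
    simp [hz, Nat.not_lt.mpr hk]
  have hzm : z (2*n) = z 0 := by
    rw [hz1 0 (by omega), hz2 (2*n) (by omega), show 2*n - 1 - 2*n = 0 by omega]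
  have hsum : ∑ k ∈ Finset.range (2*n), z k = 0 := by
    rw [two_mul, Finset.sum_range_add]
    have e1 : ∀ k ∈ Finset.range n, z k = y k := fun k hk => hz1 k (Finset.mem_range.mp hk)
    have e2 : ∀ k ∈ Finset.range n, z (n + k) = y (n - 1 - k) := by
      intro k hk
      rw [hz2 (n+k) (by omega), show 2*n - 1 - (n+k) = n - 1 - k by
        have := Finset.mem_range.mp hk; omega]
    rw [Finset.sum_congr rfl e1, Finset.sum_congr rfl e2, Finset.sum_range_reflect, h0]
    norm_num
  have hsq : ∑ k ∈ Finset.range (2*n), z k ^ 2 = 2 * ∑ k ∈ Finset.range n, y k ^ 2 := by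
    rw [two_mul, Finset.sum_range_add]
    have e1 : ∀ k ∈ Finset.range n, z k ^ 2 = y k ^ 2 := fun k hk => by
      rw [hz1 k (Finset.mem_range.mp hk)]
    have e2 : ∀ k ∈ Finset.range n, z (n + k) ^ 2 = y (n - 1 - k) ^ 2 := by
      intro k hk
      rw [hz2 (n+k) (by omega), show 2*n - 1 - (n+k) = n - 1 - k by
        have := Finset.mem_range.mp hk; omega]
    rw [Finset.sum_congr rfl e1, Finset.sum_congr rfl e2,
      Finset.sum_range_reflect (fun k => y k ^ 2) n]
    ring
  have hgap : ∑ k ∈ Finset.range (2*n), (z (k+1) - z k)^2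
      = 2 * ∑ k ∈ Finset.range (n-1), (y (k+1) - y k)^2 := by
    rw [two_mul, Finset.sum_range_add]
    have half1 : ∑ k ∈ Finset.range n, (z (k+1) - z k)^2
        = ∑ k ∈ Finset.range (n-1), (y (k+1) - y k)^2 := by
      rw [show n = (n-1) + 1 by omega, Finset.sum_range_succ, show (n-1) + 1 = n by omega]
      have et : z n - z (n-1) = 0 := by
        rw [hz1 (n-1) (by omega), hz2 n (by omega), show 2*n - 1 - n = n - 1 by omega, sub_self]
      rw [et]
      have e1 : ∀ k ∈ Finset.range (n-1), (z (k+1) - z k)^2 = (y (k+1) - y k)^2 := by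
        intro k hk
        have := Finset.mem_range.mp hk
        rw [hz1 k (by omega), hz1 (k+1) (by omega)]
      rw [Finset.sum_congr rfl e1]
      ring
    have half2 : ∑ k ∈ Finset.range n, (z (n + k + 1) - z (n + k))^2
        = ∑ k ∈ Finset.range (n-1), (y (k+1) - y k)^2 := by
      have e2 : ∀ k ∈ Finset.range n, (z (n + k + 1) - z (n + k))^2
          = (y (n-2-k) - y (n-1-k))^2 := by
        intro k hk
        have hkn := Finset.mem_range.mp hk
        rw [hz2 (n+k) (by omega), hz2 (n+k+1) (by omega),
          show 2*n - 1 - (n+k) = n-1-k by omega, show 2*n - 1 - (n+k+1) = n-2-k by omega]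
      rw [Finset.sum_congr rfl e2]
      have hsp := Finset.sum_range_succ (fun k => (y (n-2-k) - y (n-1-k))^2) (n-1)
      rw [show (n-1)+1 = n by omega] at hsp
      rw [hsp]
      have et : (y (n-2-(n-1)) - y (n-1-(n-1)))^2 = 0 := by
        rw [show n-2-(n-1) = 0 by omega, show n-1-(n-1) = 0 by omega, sub_self]
        ring
      simp only [et, add_zero]
      have e3 : ∀ k ∈ Finset.range (n-1), (y (n-2-k) - y (n-1-k))^2
          = (fun j => (y (j+1) - y j)^2) (n-1-1-k) := by
        intro k hk
        have := Finset.mem_range.mp hk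
        simp only
        rw [show n-1-1-k = n-2-k by omega, show n-2-k+1 = n-1-k by omega]
        ring
      rw [Finset.sum_congr rfl e3, Finset.sum_range_reflect (fun j => (y (j+1) - y j)^2) (n-1)]
    rw [half1, half2]
    ring
  have hcw := cycle_wirtinger (2*n) (by omega) z hzm hsum
  rw [hsq, hgap] at hcw
  have hangle : 2*Real.pi/((2*n : ℕ) : ℝ) = Real.pi/(n : ℝ) := by
    have : ((2*n : ℕ) : ℝ) = 2*(n:ℝ) := by push_cast; ring
    rw [this]
    have hn0 : (n:ℝ) ≠ 0 := by
      have : 0 < n := by omega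
      exact_mod_cast Nat.pos_iff_ne_zero.mp this
    field_simp
  rw [hangle] at hcw
  linarith

lemma exists_cross {V : Type} (G : SimpleGraph V) (S : Set V) {a b : V}
    (w : G.Walk a b) (ha : a ∈ S) (hb : b ∉ S) :
    ∃ u ∈ S, ∃ v, v ∉ S ∧ G.Adj u v := by
  induction w with
  | nil => exact absurd ha hb
  | @cons u v w h p ih =>
    by_cases hm : v ∈ S
    · exact ih hm hb
    · exact ⟨u, ha, v, hm, h⟩

lemma quad_lower {V : Type} [Fintype V] [DecidableEq V] (G : SimpleGraph V) [DecidableRel G.Adj]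
    (hG : G.Connected) (hcard : 2 ≤ Fintype.card V) (x : V → ℝ) (hx : ∑ v, x v = 0) :
    2*(1 - Real.cos (Real.pi / (Fintype.card V))) * (∑ v, x v ^ 2)
      ≤ (∑ i : V, ∑ j : V, if G.Adj i j then (x i - x j)^2 else 0) / 2 := by
  classical
  set n := Fintype.card V with hn
  have hn2 : 2 ≤ n := hcard
  have hn0 : 0 < n := by omega
  set e₀ : Fin n ≃ V := (Fintype.equivFin V).symm with he₀
  set f : Fin n → ℝ := x ∘ e₀ with hf
  set σ : Equiv.Perm (Fin n) := Tuple.sort f with hσ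
  have hmono : Monotone (f ∘ σ) := Tuple.monotone_sort f
  set e : Fin n ≃ V := σ.trans e₀ with he
  have hxe : ∀ k : Fin n, x (e k) = (f ∘ σ) k := fun k => rfl
  set y : ℕ → ℝ := fun k => x (e ⟨min k (n-1), by omega⟩) with hy
  have hyk : ∀ k (h : k < n), y k = x (e ⟨k, h⟩) := by
    intro k h
    have hmk : (⟨min k (n-1), by omega⟩ : Fin n) = ⟨k, h⟩ := by
      apply Fin.ext
      show min k (n-1) = k
      omega
    rw [hy]
    simp only
    rw [hmk]
  have hymono : Monotone y := by
    intro a b hab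
    exact hmono (show (⟨min a (n-1), by omega⟩ : Fin n) ≤ ⟨min b (n-1), by omega⟩ from
      Fin.mk_le_mk.mpr (by omega))
  
  have hyfin : ∀ k : Fin n, y (k : ℕ) = x (e k) := fun k => hyk k k.isLt
  have hsumy : ∑ k ∈ Finset.range n, y k = 0 := by
    rw [← Fin.sum_univ_eq_sum_range (fun k => y k) n,
      Finset.sum_congr rfl (fun k _ => hyfin k), Equiv.sum_comp e (fun v => x v)]
    exact hx
  have hsumsq : ∑ k ∈ Finset.range n, y k ^ 2 = ∑ v, x v ^ 2 := by
    rw [← Fin.sum_univ_eq_sum_range (fun k => y k ^ 2) n,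
      Finset.sum_congr rfl (fun (k : Fin n) _ => by rw [hyfin k]),
      Equiv.sum_comp e (fun v => x v ^ 2)]
  have hcross : ∀ k, k < n-1 → ∃ q : V × V, G.Adj q.1 q.2 ∧
      ((e.symm q.1 : Fin n) : ℕ) ≤ k ∧ k < ((e.symm q.2 : Fin n) : ℕ) := by
    intro k hk
    set S : Set V := {v | ((e.symm v : Fin n) : ℕ) ≤ k} with hS
    have ha : e ⟨0, by omega⟩ ∈ S := by
      show ((e.symm (e ⟨0, by omega⟩) : Fin n) : ℕ) ≤ k
      rw [Equiv.symm_apply_apply]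
      show 0 ≤ k
      omega
    have hb : e ⟨n-1, by omega⟩ ∉ S := by
      intro hbm
      have : ((e.symm (e ⟨n-1, by omega⟩) : Fin n) : ℕ) ≤ k := hbm
      rw [Equiv.symm_apply_apply] at this
      have : n - 1 ≤ k := this
      omega
    obtain ⟨u, hu, v, hv, huv⟩ :=
      exists_cross G S ((hG.preconnected (e ⟨0, by omega⟩) (e ⟨n-1, by omega⟩)).some) ha hb
    exact ⟨(u, v), huv, hu, Nat.not_le.mp hv⟩
  have hex : ∀ k : ℕ, ∃ q : V × V, k < n-1 → (G.Adj q.1 q.2 ∧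
      ((e.symm q.1 : Fin n) : ℕ) ≤ k ∧ k < ((e.symm q.2 : Fin n) : ℕ)) := by
    intro k
    by_cases h : k < n-1
    · obtain ⟨q, hq⟩ := hcross k h
      exact ⟨q, fun _ => hq⟩
    · exact ⟨(e ⟨0, by omega⟩, e ⟨0, by omega⟩), fun hk => absurd hk h⟩
  choose p hp using hex
  set F := Finset.range (n-1) with hF
  set g : ℕ → ℝ := fun k => y (k+1) - y k with hgdef
  have hg0 : ∀ k, 0 ≤ g k := fun k => sub_nonneg.mpr (hymono (Nat.le_succ k))
  set P1 : Finset (V × V) := (Finset.univ ×ˢ Finset.univ).filter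
      (fun q => G.Adj q.1 q.2 ∧ (((e.symm q.1 : Fin n) : ℕ) < ((e.symm q.2 : Fin n) : ℕ)))
      with hP1
  set T := F.image p with hT
  have tele : ∀ a b : ℕ, a ≤ b → ∑ k ∈ Finset.Ico a b, g k = y b - y a := by
    intro a b hab
    rw [Finset.sum_Ico_eq_sub _ hab]
    simp only [hgdef]
    rw [Finset.sum_range_sub y, Finset.sum_range_sub y]
    ring
  have step2 : ∀ q ∈ T, (∑ k ∈ F.filter (fun k => p k = q), g k ^ 2) ≤ (x q.2 - x q.1)^2 := by
    intro q hq
    obtain ⟨k₀, hk₀, hpk₀⟩ := Finset.mem_image.mp hq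
    have hk₀' : k₀ < n-1 := Finset.mem_range.mp hk₀
    have hq' := hp k₀ hk₀'
    rw [hpk₀] at hq'
    obtain ⟨hadj, ha1, ha2⟩ := hq'
    have hab : ((e.symm q.1 : Fin n) : ℕ) ≤ ((e.symm q.2 : Fin n) : ℕ) := by omega
    have hsub : F.filter (fun k => p k = q) ⊆
        Finset.Ico ((e.symm q.1 : Fin n) : ℕ) ((e.symm q.2 : Fin n) : ℕ) := by
      intro k hk
      obtain ⟨hkF, hkp⟩ := Finset.mem_filter.mp hk
      have hkn := Finset.mem_range.mp hkF
      have his := hp k hkn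
      rw [hkp] at his
      exact Finset.mem_Ico.mpr ⟨his.2.1, his.2.2⟩
    have ht0 : 0 ≤ ∑ k ∈ F.filter (fun k => p k = q), g k :=
      Finset.sum_nonneg fun k _ => hg0 k
    have hyq : ∀ w : V, y ((e.symm w : Fin n) : ℕ) = x w := by
      intro w
      rw [hyk _ (e.symm w).isLt]
      congr 1
      rw [Fin.eta, Equiv.apply_symm_apply]
    have htle : (∑ k ∈ F.filter (fun k => p k = q), g k) ≤ x q.2 - x q.1 := by
      have h1 : (∑ k ∈ F.filter (fun k => p k = q), g k) ≤
          ∑ k ∈ Finset.Ico ((e.symm q.1 : Fin n) : ℕ) ((e.symm q.2 : Fin n) : ℕ), g k :=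
        Finset.sum_le_sum_of_subset_of_nonneg hsub (fun k _ _ => hg0 k)
      rw [tele _ _ hab, hyq q.1, hyq q.2] at h1
      exact h1
    calc ∑ k ∈ F.filter (fun k => p k = q), g k ^ 2
        ≤ ∑ k ∈ F.filter (fun k => p k = q), g k * (∑ j ∈ F.filter (fun k => p k = q), g j) := by
          refine Finset.sum_le_sum fun k hk => ?_
          rw [sq]
          exact mul_le_mul_of_nonneg_left
            (Finset.single_le_sum (fun j _ => hg0 j) hk) (hg0 k)
      _ = (∑ k ∈ F.filter (fun k => p k = q), g k) * (∑ k ∈ F.filter (fun k => p k = q), g k) := by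
          rw [← Finset.sum_mul]
      _ ≤ (x q.2 - x q.1)^2 := by nlinarith
  have step1 : ∑ k ∈ F, g k ^ 2 ≤ ∑ q ∈ T, (x q.2 - x q.1)^2 := by
    rw [← Finset.sum_fiberwise_of_maps_to (fun k hk => Finset.mem_image_of_mem p hk)
      (fun k => g k ^ 2)]
    exact Finset.sum_le_sum step2
  have hTP1 : T ⊆ P1 := by
    intro q hq
    obtain ⟨k₀, hk₀, hpk₀⟩ := Finset.mem_image.mp hq
    have hq' := hp k₀ (Finset.mem_range.mp hk₀)
    rw [hpk₀] at hq'
    exact Finset.mem_filter.mpr ⟨Finset.mem_product.mpr ⟨Finset.mem_univ _, Finset.mem_univ _⟩,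
      hq'.1, by omega⟩
  have step3 : ∑ q ∈ T, (x q.2 - x q.1)^2 ≤ ∑ q ∈ P1, (x q.2 - x q.1)^2 :=
    Finset.sum_le_sum_of_subset_of_nonneg hTP1 (fun q _ _ => sq_nonneg _)
  have hW : (∑ i : V, ∑ j : V, if G.Adj i j then (x i - x j)^2 else 0)
      = 2 * ∑ q ∈ P1, (x q.2 - x q.1)^2 := by
    rw [← Finset.sum_product']
    rw [← Finset.sum_filter]
    set P := (Finset.univ ×ˢ Finset.univ).filter (fun q : V × V => G.Adj q.1 q.2) with hP
    have hsplit := Finset.sum_filter_add_sum_filter_not P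
      (fun q : V × V => (((e.symm q.1 : Fin n) : ℕ) < ((e.symm q.2 : Fin n) : ℕ)))
      (fun q => (x q.1 - x q.2)^2)
    have hP1' : P.filter (fun q => (((e.symm q.1 : Fin n) : ℕ) < ((e.symm q.2 : Fin n) : ℕ)))
        = P1 := by
      rw [hP, hP1, Finset.filter_filter]
    have hrankne : ∀ q : V × V, G.Adj q.1 q.2 →
        ((e.symm q.1 : Fin n) : ℕ) ≠ ((e.symm q.2 : Fin n) : ℕ) := by
      intro q hadj hvv
      exact G.ne_of_adj hadj (e.symm.injective (Fin.val_injective hvv))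
    have hswap : ∑ q ∈ P.filter (fun q =>
          ¬ (((e.symm q.1 : Fin n) : ℕ) < ((e.symm q.2 : Fin n) : ℕ))), (x q.1 - x q.2)^2
        = ∑ q ∈ P1, (x q.1 - x q.2)^2 := by
      refine Finset.sum_nbij' (fun q => Prod.swap q) (fun q => Prod.swap q) ?_ ?_ ?_ ?_ ?_
      · intro q hq
        obtain ⟨hqP, hqlt⟩ := Finset.mem_filter.mp hq
        obtain ⟨_, hadj⟩ := Finset.mem_filter.mp hqP
        refine Finset.mem_filter.mpr ⟨Finset.mem_product.mpr
          ⟨Finset.mem_univ _, Finset.mem_univ _⟩, hadj.symm, ?_⟩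
        have := hrankne q hadj
        simp only [Prod.swap]
        omega
      · intro q hq
        obtain ⟨_, hadj, hlt⟩ := Finset.mem_filter.mp hq
        refine Finset.mem_filter.mpr ⟨Finset.mem_filter.mpr ⟨Finset.mem_product.mpr
          ⟨Finset.mem_univ _, Finset.mem_univ _⟩, hadj.symm⟩, ?_⟩
        simp only [Prod.swap]
        omega
      · intro q _; exact Prod.swap_swap q
      · intro q _; exact Prod.swap_swap q
      · intro q _
        simp only [Prod.swap]
        ring
    have horient : ∑ q ∈ P1, (x q.1 - x q.2)^2 = ∑ q ∈ P1, (x q.2 - x q.1)^2 :=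
      Finset.sum_congr rfl fun q _ => by ring
    rw [← hsplit, hP1', hswap, horient]
    ring
  have hwirt := path_wirtinger n hn2 y hsumy
  rw [hsumsq] at hwirt
  have hgaps : ∑ k ∈ Finset.range (n-1), (y (k+1) - y k)^2 = ∑ k ∈ F, g k ^ 2 := rfl
  rw [hgaps] at hwirt
  rw [hW]
  have := le_trans step1 step3
  linarith


/-- A connected finite simple graph on `L ≥ 2` vertices has algebraic
connectivity at least that of the path graph on `L` vertices, namely `2(1 − cos(π/L))`;
in particular `a(G) = Ω(1/L²)`. -/
theorem algConn_ge_of_connected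
    {V : Type} [Fintype V] [DecidableEq V]
    (G : SimpleGraph V) [DecidableRel G.Adj]
    (hG : G.Connected) (L : ℕ) (hL : Fintype.card V = L) (hL2 : 2 ≤ L) :
    2 * (1 - Real.cos (Real.pi / L)) ≤ algConn G := by
  subst hL
  have hc2 : 2 ≤ Fintype.card V := hL2
  have hne : Nonempty {p : V × V // p.1 ≠ p.2} := by
    obtain ⟨a, b, hab⟩ := Fintype.exists_pair_of_one_lt_card (by omega : 1 < Fintype.card V)
    exact ⟨⟨(a, b), hab⟩⟩
  apply le_ciInf
  rintro ⟨⟨i, j⟩, hij⟩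
  have hij' : i ≠ j := hij
  set c : ℝ := 2 * (1 - Real.cos (Real.pi / (Fintype.card V))) with hc
  show c ≤ max (lapEig G i) (lapEig G j)
  have hH : (G.lapMatrix ℝ).IsHermitian := (SimpleGraph.posSemidef_lapMatrix (R := ℝ) (G := G)).1
  have key : ∀ xv : V → ℝ, (∑ w, xv w = 0) →
      c * (∑ w, xv w ^ 2) ≤ xv ⬝ᵥ (G.lapMatrix ℝ *ᵥ xv) := by
    intro xv hxv
    rw [← Matrix.toLinearMap₂'_apply', SimpleGraph.lapMatrix_toLinearMap₂']
    exact quad_lower G hG hc2 xv hxv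
  set u : V → ℝ := ⇑(hH.eigenvectorBasis i) with hu
  set v : V → ℝ := ⇑(hH.eigenvectorBasis j) with hv
  have hLu : G.lapMatrix ℝ *ᵥ u = lapEig G i • u := hH.mulVec_eigenvectorBasis i
  have hLv : G.lapMatrix ℝ *ᵥ v = lapEig G j • v := hH.mulVec_eigenvectorBasis j
  have hON := hH.eigenvectorBasis.orthonormal
  rw [orthonormal_iff_ite] at hON
  have hdot : ∀ a b : V, (∑ w, hH.eigenvectorBasis a w * hH.eigenvectorBasis b w)
      = if a = b then 1 else 0 := by
    intro a b
    rw [← hON a b]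
    simp [PiLp.inner_apply, RCLike.inner_apply]
    exact Finset.sum_congr rfl fun w _ => mul_comm _ _
  have duu : ∑ w, u w * u w = 1 := by
    have h := hdot i i; rw [if_pos rfl] at h; exact h
  have dvv : ∑ w, v w * v w = 1 := by
    have h := hdot j j; rw [if_pos rfl] at h; exact h
  have duv : ∑ w, u w * v w = 0 := by
    have h := hdot i j; rw [if_neg hij'] at h; exact h
  have dvu : ∑ w, v w * u w = 0 := by
    rw [← duv]; exact Finset.sum_congr rfl fun w _ => mul_comm _ _
  set li := lapEig G i with hli
  set lj := lapEig G j with hlj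
  by_cases hsu : (∑ w, u w) = 0
  · have hk := key u hsu
    have e1 : ∑ w, u w ^ 2 = 1 := by
      rw [← duu]; exact Finset.sum_congr rfl fun w _ => by ring
    have e2 : u ⬝ᵥ (G.lapMatrix ℝ *ᵥ u) = li := by
      rw [hLu]
      simp only [dotProduct, Pi.smul_apply, smul_eq_mul]
      have : ∀ w : V, u w * (li * u w) = li * (u w * u w) := fun w => by ring
      rw [Finset.sum_congr rfl fun w _ => this w, ← Finset.mul_sum, duu, mul_one]
    rw [e1, e2, mul_one] at hk
    exact le_trans hk (le_max_left _ _)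
  · set a : ℝ := (∑ w, v w) with ha
    set b : ℝ := -(∑ w, u w) with hb
    have hbne : b ≠ 0 := by simpa [hb] using hsu
    set xv : V → ℝ := fun w => a * u w + b * v w with hxv
    have hsx : ∑ w, xv w = 0 := by
      have e : ∑ w, xv w = a * (∑ w, u w) + b * (∑ w, v w) := by
        simp only [hxv]
        rw [Finset.sum_add_distrib, ← Finset.mul_sum, ← Finset.mul_sum]
      rw [e, ha, hb]
      ring
    have hk := key xv hsx
    have hsq : ∑ w, xv w ^ 2 = a^2 + b^2 := by
      simp only [hxv]
      have e : ∀ w : V, (a * u w + b * v w)^2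
          = a^2*(u w * u w) + (2*a*b)*(u w * v w) + b^2*(v w * v w) := fun w => by ring
      rw [Finset.sum_congr rfl fun w _ => e w, Finset.sum_add_distrib, Finset.sum_add_distrib,
        ← Finset.mul_sum, ← Finset.mul_sum, ← Finset.mul_sum, duu, duv, dvv]
      ring
    have hQ : xv ⬝ᵥ (G.lapMatrix ℝ *ᵥ xv) = a^2 * li + b^2 * lj := by
      have hxv' : xv = a • u + b • v := by funext w; simp [hxv]
      rw [hxv', Matrix.mulVec_add, Matrix.mulVec_smul, Matrix.mulVec_smul, hLu, hLv]
      simp only [dotProduct, Pi.add_apply, Pi.smul_apply, smul_eq_mul]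
      have e : ∀ w : V, (a * u w + b * v w) * (a * (li * u w) + b * (lj * v w))
          = (a^2*li)*(u w * u w) + (a*b*lj)*(u w * v w) + (a*b*li)*(v w * u w)
            + (b^2*lj)*(v w * v w) := fun w => by ring
      rw [Finset.sum_congr rfl fun w _ => e w, Finset.sum_add_distrib, Finset.sum_add_distrib,
        Finset.sum_add_distrib, ← Finset.mul_sum, ← Finset.mul_sum, ← Finset.mul_sum,
        ← Finset.mul_sum, duu, duv, dvu, dvv]
      ring
    rw [hsq, hQ] at hk
    have hb2 : 0 < b^2 := (sq_nonneg b).lt_of_ne' (pow_ne_zero 2 hbne)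
    have hpos : 0 < a^2 + b^2 := by nlinarith [sq_nonneg a]
    have hbound : a^2 * li + b^2 * lj ≤ (a^2 + b^2) * max li lj := by
      have h1 : a^2 * li ≤ a^2 * max li lj :=
        mul_le_mul_of_nonneg_left (le_max_left _ _) (sq_nonneg a)
      have h2 : b^2 * lj ≤ b^2 * max li lj :=
        mul_le_mul_of_nonneg_left (le_max_right _ _) (sq_nonneg b)
      linarith
    have : c * (a^2 + b^2) ≤ max li lj * (a^2 + b^2) := by
      calc c * (a^2+b^2) ≤ a^2 * li + b^2 * lj := hk
        _ ≤ (a^2 + b^2) * max li lj := hbound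
        _ = max li lj * (a^2+b^2) := by ring
    exact le_of_mul_le_mul_right this hpos
end
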